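/- arXiv:0804.0633 — 5 statements merged into one kernel-verified Lean document; each statement's English description precedes it below -/
import Mathlib

section
/- Let p be a noncommutative polynomial of degree d in g letters (evaluated on g-tuples of real symmetric matrices) and set N(g,d) = Σ_{j=0}^{d} g^j. If p(X) = 0 for every X in some nonempty open subset U of S_{N(g,d)}(ℝ^g), then p = 0. -/
open scoped BigOperators Kronecker Matrix

namespace NCConvexity

/-! ### Noncommutative polynomials in two classes of `g` letters:
`a`-letters are `Sum.inl i`, `x`-letters are `Sum.inr i`. -/

/-- The alphabet: `g` letters `a` and `g` letters `x`. -/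
abbrev L2 (g : ℕ) := Sum (Fin g) (Fin g)

/-- Words in the letters `(a, x)`. -/
abbrev Word2 (g : ℕ) := FreeMonoid (L2 g)

/-- The free algebra `ℝ⟨a,x⟩` of noncommutative polynomials in the `2g` letters. -/
abbrev NC2 (g : ℕ) := MonoidAlgebra ℝ (Word2 g)

variable {g : ℕ}

/-- Number of `x`-letters in a list of letters. -/
def xCountL (w : List (L2 g)) : ℕ := w.countP (fun l => l.isRight)

/-- Number of `a`-letters in a list of letters. -/
def aCountL (w : List (L2 g)) : ℕ := w.countP (fun l => l.isLeft)

/-- Number of `x`-letters in a word. -/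
def xCount (w : Word2 g) : ℕ := xCountL (FreeMonoid.toList w)

/-- Number of `a`-letters in a word. -/
def aCount (w : Word2 g) : ℕ := aCountL (FreeMonoid.toList w)

/-- `p` has degree at most `k` in `x`. -/
def xDegLe (p : NC2 g) (k : ℕ) : Prop := ∀ w ∈ p.coeff.support, xCount w ≤ k

/-- `p` has degree at most `k` in `a`. -/
def aDegLe (p : NC2 g) (k : ℕ) : Prop := ∀ w ∈ p.coeff.support, aCount w ≤ k

/-- `p` is homogeneous of degree `k` in `x`. -/
def xHomog (p : NC2 g) (k : ℕ) : Prop := ∀ w ∈ p.coeff.support, xCount w = k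

/-- `p` is homogeneous of degree `k` in `a`. -/
def aHomog (p : NC2 g) (k : ℕ) : Prop := ∀ w ∈ p.coeff.support, aCount w = k

/-- The degree of `p` in `x`. -/
noncomputable def xDegree (p : NC2 g) : ℕ := p.coeff.support.sup xCount

/-- The degree of `p` in `a`. -/
noncomputable def aDegree (p : NC2 g) : ℕ := p.coeff.support.sup aCount

/-- `p` is a polynomial in the letters `a` alone (no `x`-letters occur). -/
def inAOnly (p : NC2 g) : Prop := ∀ w ∈ p.coeff.support, xCount w = 0

/-- The transpose (reversal) involution on `ℝ⟨a,x⟩`. -/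
noncomputable def ncT (p : NC2 g) : NC2 g :=
  MonoidAlgebra.ofCoeff (Finsupp.mapDomain (fun w : Word2 g => FreeMonoid.ofList (FreeMonoid.toList w).reverse) p.coeff)

/-- `p` is a symmetric polynomial. -/
def IsSymPoly (p : NC2 g) : Prop := ncT p = p

/-- A letter, as an element of `ℝ⟨a,x⟩`. -/
noncomputable def ltr (l : L2 g) : NC2 g := MonoidAlgebra.of ℝ (Word2 g) (FreeMonoid.of l)

/-- Evaluation of a list of letters at a pair of `g`-tuples of matrices. -/
def listEval {m : Type} [Fintype m] [DecidableEq m]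
    (w : List (L2 g)) (A X : Fin g → Matrix m m ℝ) : Matrix m m ℝ :=
  (w.map (Sum.elim A X)).prod

/-- Evaluation of a word at a pair of `g`-tuples of matrices. -/
def wordEval {m : Type} [Fintype m] [DecidableEq m]
    (w : Word2 g) (A X : Fin g → Matrix m m ℝ) : Matrix m m ℝ :=
  listEval (FreeMonoid.toList w) A X

/-- Evaluation of a polynomial `p(a,x)` at a pair of `g`-tuples of matrices:
substitute `A i` for `a_i` and `X i` for `x_i`. -/
noncomputable def eval {m : Type} [Fintype m] [DecidableEq m]
    (p : NC2 g) (A X : Fin g → Matrix m m ℝ) : Matrix m m ℝ :=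
  Finsupp.sum p.coeff (fun w c => c • wordEval w A X)

/-- A `g`-tuple of `n × n` real matrices. -/
abbrev MatTuple (g n : ℕ) := Fin g → Matrix (Fin n) (Fin n) ℝ

/-- A tuple of symmetric matrices, i.e. an element of `S_n(ℝ^g)`. -/
def IsSymTuple {m : Type} (A : Fin g → Matrix m m ℝ) : Prop := ∀ i, (A i).IsSymm

/-- Convex combination `t X + (1-t) Y` of two tuples. -/
noncomputable def cvx {m : Type} (t : ℝ) (X Y : Fin g → Matrix m m ℝ) :
    Fin g → Matrix m m ℝ := fun i => t • X i + (1 - t) • Y i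

/-- Direct sum of two square matrices. -/
noncomputable def dirSum {n m : ℕ} (M : Matrix (Fin n) (Fin n) ℝ) (N : Matrix (Fin m) (Fin m) ℝ) :
    Matrix (Fin (n + m)) (Fin (n + m)) ℝ :=
  Matrix.reindex finSumFinEquiv finSumFinEquiv (Matrix.fromBlocks M 0 0 N)

/-- Direct sum of two tuples of matrices. -/
noncomputable def tupDirSum {n m : ℕ} (A : MatTuple g n) (B : MatTuple g m) :
    MatTuple g (n + m) := fun i => dirSum (A i) (B i)

/-- The partial Hessian of `p` in `x` at `(A, X)` in the direction `H`: the second derivative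
at `t = 0` of `t ↦ p(A, X + tH)` (computed entrywise). -/
noncomputable def hess {m : Type} [Fintype m] [DecidableEq m]
    (p : NC2 g) (A X H : Fin g → Matrix m m ℝ) : Matrix m m ℝ :=
  Matrix.of fun i j =>
    iteratedDeriv 2 (fun t : ℝ => eval p A (fun k => X k + t • H k) i j) 0

/-- Evaluation of a matrix with entries in `ℝ⟨a,x⟩`, as one big block matrix. -/
noncomputable def evalMat {ι : Type} {m : Type} [Fintype m] [DecidableEq m]
    (Z : Matrix ι ι (NC2 g)) (A X : Fin g → Matrix m m ℝ) : Matrix (ι × m) (ι × m) ℝ :=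
  Matrix.of fun pr qr => eval (Z pr.1 qr.1) A X pr.2 qr.2

/-- A matrix of polynomials which is symmetric with respect to the transpose involution. -/
def SymPolyMat {ι : Type} (Z : Matrix ι ι (NC2 g)) : Prop := ∀ i j, ncT (Z i j) = Z j i

/-- `N(g,d) = Σ_{j=0}^d g^j`. -/
def Ngd (g d : ℕ) : ℕ := ∑ j ∈ Finset.range (d + 1), g ^ j

/-! ### Noncommutative polynomials in a single class of `g` letters. -/

abbrev Word1 (g : ℕ) := FreeMonoid (Fin g)

/-- Noncommutative polynomials in `g` letters. -/
abbrev NC1 (g : ℕ) := MonoidAlgebra ℝ (Word1 g)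

/-- Evaluation at a `g`-tuple of matrices. -/
noncomputable def eval1 {m : Type} [Fintype m] [DecidableEq m]
    (p : NC1 g) (A : Fin g → Matrix m m ℝ) : Matrix m m ℝ :=
  Finsupp.sum p.coeff (fun w c => c • ((FreeMonoid.toList w).map A).prod)

/-- The degree of a polynomial in `g` letters. -/
noncomputable def degree1 (p : NC1 g) : ℕ :=
  p.coeff.support.sup (fun w => (FreeMonoid.toList w).length)

/-! ### Noncommutative polynomials in three classes of `g` letters `(a, x, h)`. -/

abbrev L3 (g : ℕ) := Sum (Fin g) (Sum (Fin g) (Fin g))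
abbrev Word3 (g : ℕ) := FreeMonoid (L3 g)

/-- The free algebra `ℝ⟨a,x,h⟩`. -/
abbrev NC3 (g : ℕ) := MonoidAlgebra ℝ (Word3 g)

def hCount3 (w : Word3 g) : ℕ :=
  (FreeMonoid.toList w).countP (fun l => match l with | .inr (.inr _) => true | _ => false)

def xCount3 (w : Word3 g) : ℕ :=
  (FreeMonoid.toList w).countP (fun l => match l with | .inr (.inl _) => true | _ => false)

def aCount3 (w : Word3 g) : ℕ :=
  (FreeMonoid.toList w).countP (fun l => match l with | .inl _ => true | _ => false)

noncomputable def xDegree3 (q : NC3 g) : ℕ := q.coeff.support.sup xCount3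
noncomputable def aDegree3 (q : NC3 g) : ℕ := q.coeff.support.sup aCount3

/-- homogeneous of degree `k` in `h` -/
def hHomog3 (q : NC3 g) (k : ℕ) : Prop := ∀ w ∈ q.coeff.support, hCount3 w = k

/-- The transpose (reversal) involution on `ℝ⟨a,x,h⟩`. -/
noncomputable def ncT3 (q : NC3 g) : NC3 g :=
  MonoidAlgebra.ofCoeff (Finsupp.mapDomain (fun w : Word3 g => FreeMonoid.ofList (FreeMonoid.toList w).reverse) q.coeff)

def IsSymPoly3 (q : NC3 g) : Prop := ncT3 q = q

noncomputable def ltr3 (l : L3 g) : NC3 g := MonoidAlgebra.of ℝ (Word3 g) (FreeMonoid.of l)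

/-- The embedding `ℝ⟨a,x⟩ → ℝ⟨a,x,h⟩`. -/
noncomputable def emb23 {g : ℕ} : NC2 g →ₐ[ℝ] NC3 g :=
  MonoidAlgebra.lift ℝ (NC3 g) (Word2 g)
    (FreeMonoid.lift (fun l => ltr3 (Sum.map id Sum.inl l)))

/-- The substitution `a_i ↦ a_i`, `x_i ↦ x_i + t·h_i`, landing in polynomials in a central
variable `t` over `ℝ⟨a,x,h⟩`. -/
noncomputable def hessSubst {g : ℕ} : NC2 g →ₐ[ℝ] Polynomial (NC3 g) :=
  MonoidAlgebra.lift ℝ (Polynomial (NC3 g)) (Word2 g)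
    (FreeMonoid.lift (fun l => match l with
      | Sum.inl i => Polynomial.C (ltr3 (Sum.inl i))
      | Sum.inr i => Polynomial.C (ltr3 (Sum.inr (Sum.inl i)))
          + Polynomial.X * Polynomial.C (ltr3 (Sum.inr (Sum.inr i)))))

/-- The partial Hessian of `p(a,x)` with respect to `x`, as the polynomial
`p''_{xx}(a,x)[h]` in the letters `(a,x,h)`: the second derivative at `t = 0` of
`t ↦ p(a, x + t h)`, i.e. twice the coefficient of `t²`. -/
noncomputable def hessPoly (p : NC2 g) : NC3 g :=
  2 • Polynomial.coeff (hessSubst p) 2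

/-- The substitution sending every `x`-letter to `0` (and fixing the `a`-letters). -/
noncomputable def killX {g : ℕ} : NC2 g →ₐ[ℝ] NC2 g :=
  MonoidAlgebra.lift ℝ (NC2 g) (Word2 g)
    (FreeMonoid.lift (fun l => match l with
      | Sum.inl i => ltr (Sum.inl i)
      | Sum.inr _ => 0))

/-- The border monomial `h_j · m(a,x)`. -/
noncomputable def bmon (j : Fin g) (w : List (L2 g)) : NC3 g :=
  MonoidAlgebra.of ℝ (Word3 g)
    (FreeMonoid.ofList (Sum.inr (Sum.inr j) :: w.map (Sum.map id Sum.inl)))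

lemma countL_split (w : List (L2 g)) : xCountL w + aCountL w = w.length := by
  induction w with
  | nil => rfl
  | cons hd tl ih =>
    cases hd <;> simp [xCountL, aCountL, List.countP_cons] at * <;> omega

/-- The words indexing the border vector: at most `m` `x`-letters and at most `d` `a`-letters. -/
abbrev BWords (g m d : ℕ) := {w : List (L2 g) // xCountL w ≤ m ∧ aCountL w ≤ d}

noncomputable instance bwordsFintype (g m d : ℕ) : Fintype (BWords g m d) :=
  Fintype.ofInjective
    (fun w => fun i : Fin (m + d) => w.1[(i : ℕ)]?)
    (by
      rintro ⟨a, ha1, ha2⟩ ⟨b, hb1, hb2⟩ h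
      have hla : a.length ≤ m + d := by have := countL_split a; omega
      have hlb : b.length ≤ m + d := by have := countL_split b; omega
      apply Subtype.ext
      apply List.ext_getElem?
      intro i
      by_cases hi : i < m + d
      · exact congrFun h ⟨i, hi⟩
      · rw [List.getElem?_eq_none (le_trans hla (le_of_not_gt hi)),
          List.getElem?_eq_none (le_trans hlb (le_of_not_gt hi))])

/-- The index of the border vector: a direction `h_j` together with a word `m(a,x)`. -/
abbrev BIdx (g m d : ℕ) := Fin g × BWords g m d

/-- The border vector `V(a,x)[h]`, whose entries are the monomials `h_j · m(a,x)` with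
`m` a word having at most `m` `x`-letters and at most `d` `a`-letters. -/
noncomputable def borderVec (g m d : ℕ) : BIdx g m d → NC3 g :=
  fun jw => bmon jw.1 jw.2.1

/-- The number of positive eigenvalues (with multiplicity) of a real symmetric matrix. -/
noncomputable def posEig {m : Type} [Fintype m] [DecidableEq m] (M : Matrix m m ℝ) : ℕ :=
  if h : M.IsHermitian then (Finset.univ.filter (fun i => 0 < h.eigenvalues i)).card else 0

/-- The number of negative eigenvalues (with multiplicity) of a real symmetric matrix. -/
noncomputable def negEig {m : Type} [Fintype m] [DecidableEq m] (M : Matrix m m ℝ) : ℕ :=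
  if h : M.IsHermitian then (Finset.univ.filter (fun i => h.eigenvalues i < 0)).card else 0

/-- A sum-and-difference-of-squares decomposition of `q` with `σ` positive and `τ`
negative squares, with all factors linear in `h`. -/
def IsSDS (q : NC3 g) (σ τ : ℕ) : Prop :=
  ∃ (f : Fin σ → NC3 g) (r : Fin τ → NC3 g),
    (∀ j, hHomog3 (f j) 1) ∧ (∀ l, hHomog3 (r l) 1) ∧
    q = (∑ j, ncT3 (f j) * f j) - ∑ l, ncT3 (r l) * r l

/-- `σ₊(q)`: the minimal number of positive squares in an SDS decomposition of `q`. -/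
noncomputable def sigmaPlus (q : NC3 g) : ℕ := sInf {σ | ∃ τ, IsSDS q σ τ}

/-- `σ₋(q)`: the minimal number of negative squares in an SDS decomposition of `q`. -/
noncomputable def sigmaMinus (q : NC3 g) : ℕ := sInf {τ | ∃ σ, IsSDS q σ τ}

/-- The monomials `a_i x_j` (for `false`) and `x_j a_i` (for `true`). -/
noncomputable def Vmono (g : ℕ) : Bool × Fin g × Fin g → NC2 g :=
  fun m => match m with
  | (false, i, j) => MonoidAlgebra.of ℝ (Word2 g) (FreeMonoid.ofList [Sum.inl i, Sum.inr j])
  | (true, i, j) => MonoidAlgebra.of ℝ (Word2 g) (FreeMonoid.ofList [Sum.inr j, Sum.inl i])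

/-- The vector `W(x)` with entries `1, x_1, …, x_g`. -/
noncomputable def Wmono (g : ℕ) : Option (Fin g) → NC2 g :=
  fun o => match o with
  | none => 1
  | some i => ltr (Sum.inr i)

/-- The subspace of symmetric `n × n` matrices. -/
def symmSub (n : ℕ) : Submodule ℝ (Matrix (Fin n) (Fin n) ℝ) where
  carrier := {H | H.IsSymm}
  add_mem' := fun ha hb => ha.add hb
  zero_mem' := Matrix.isSymm_zero
  smul_mem' := fun c _ ha => ha.smul c

/-- The linear map `H ↦ (H z_1, …, H z_d)`. -/
noncomputable def stackMap (n d : ℕ) (z : Fin d → Fin n → ℝ) :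
    Matrix (Fin n) (Fin n) ℝ →ₗ[ℝ] (Fin d → Fin n → ℝ) where
  toFun H := fun j => H.mulVec (z j)
  map_add' := fun H K => by funext j; simp [Matrix.add_mulVec]
  map_smul' := fun c H => by funext j; simp [Matrix.smul_mulVec]

/-- The linear map `H ↦ ⊕_j (H_j z_1, …, H_j z_d)`. -/
noncomputable def stackMapG (g n d : ℕ) (z : Fin d → Fin n → ℝ) :
    (Fin g → Matrix (Fin n) (Fin n) ℝ) →ₗ[ℝ] (Fin g → Fin d → Fin n → ℝ) where
  toFun H := fun j i => (H j).mulVec (z i)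
  map_add' := fun H K => by funext j i; simp [Matrix.add_mulVec]
  map_smul' := fun c H => by funext j i; simp [Matrix.smul_mulVec]

end NCConvexity

open NCConvexity

/-!
Entries of `p(X)` are polynomial, hence analytic, along the line from a point of `U` to any
symmetric tuple `B`; since they vanish near the starting point, they vanish at `B`. So `p`
vanishes on all of `S_N(ℝ^g)`, `N = N(g,d)`. Index `ℝ^N` by the words of length at most `d` and
let `S_k` be the symmetric matrix of "prepend `y_k`" plus its transpose (creation plus
annihilation on a truncated Fock space). If `u` is a word of length `d = deg p`, the only way a
word `w` of length at most `d` can lead from the empty word to `u` is by creating all of `u`, so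
the `(u, ∅)` entry of `p(S)` is the coefficient of `u` in `p`. Choosing `u` of maximal length in
the support of `p` shows `p = 0`.
-/

namespace NCConvexity

variable {g d : ℕ} {m : Type} [Fintype m] [DecidableEq m]

lemma eval1_apply (p : NC1 g) (A : Fin g → Matrix m m ℝ) (i j : m) :
    eval1 p A i j =
      ∑ w ∈ p.coeff.support, p.coeff w * ((FreeMonoid.toList w).map A).prod i j := by
  simp [eval1, Finsupp.sum, Matrix.sum_apply]

lemma map_eval1 {n : Type} [Fintype n] [DecidableEq n] {F : Type*}
    [FunLike F (Matrix m m ℝ) (Matrix n n ℝ)] [AlgHomClass F ℝ _ _] (f : F) (p : NC1 g)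
    (A : Fin g → Matrix m m ℝ) :
    f (eval1 p A) = eval1 p (fun k => f (A k)) := by
  simp [eval1, Finsupp.sum, map_list_prod, List.map_map, Function.comp_def]

section Analytic

variable {E : Type*} [NormedAddCommGroup E] [NormedSpace ℝ E]

lemma analyticAt_list_prod_apply {ι : Type*} {A : ι → E → Matrix m m ℝ} {x : E}
    (hA : ∀ k i j, AnalyticAt ℝ (fun y => A k y i j) x) (w : List ι) (i j : m) :
    AnalyticAt ℝ (fun y => (w.map (A · y)).prod i j) x := by
  induction w generalizing i with
  | nil => simpa using analyticAt_const
  | cons k w ih =>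
    simp only [List.map_cons, List.prod_cons, Matrix.mul_apply]
    exact Finset.analyticAt_fun_sum _ fun l _ => (hA k i l).mul (ih l)

lemma analyticAt_eval1_apply (p : NC1 g) {A : E → Fin g → Matrix m m ℝ} {x : E}
    (hA : ∀ k i j, AnalyticAt ℝ (fun y => A y k i j) x) (i j : m) :
    AnalyticAt ℝ (fun y => eval1 p (A y) i j) x := by
  simp only [eval1_apply]
  exact Finset.analyticAt_fun_sum _ fun w _ =>
    analyticAt_const.mul (analyticAt_list_prod_apply hA _ i j)

end Analytic

lemma eval1_eq_zero_of_isSymTuple (p : NC1 g) (U : Set (Fin g → Matrix m m ℝ))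
    (hne : U.Nonempty) (hUsym : ∀ A ∈ U, IsSymTuple A)
    (hUopen :
      IsOpen ((Subtype.val : {A : Fin g → Matrix m m ℝ // IsSymTuple A} → _) ⁻¹' U))
    (hvan : ∀ A ∈ U, eval1 p A = 0) {B : Fin g → Matrix m m ℝ} (hB : IsSymTuple B) :
    eval1 p B = 0 := by
  obtain ⟨A, hA⟩ := hne
  set L : ℝ → Fin g → Matrix m m ℝ := fun t k => A k + t • (B k - A k)
  have hLsym (t : ℝ) : IsSymTuple (L t) := fun k =>
    (hUsym A hA k).add (((hB k).sub (hUsym A hA k)).smul t)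
  have hLopen : IsOpen {t | L t ∈ U} :=
    hUopen.preimage (Continuous.subtype_mk (by fun_prop) hLsym)
  ext i j
  have hanalytic : AnalyticOnNhd ℝ (fun t => eval1 p (L t) i j) Set.univ := fun t _ =>
    analyticAt_eval1_apply p (fun k a b => by
      simp only [L, Matrix.add_apply, Matrix.smul_apply, smul_eq_mul]; fun_prop) i j
  have hnear : (fun t => eval1 p (L t) i j) =ᶠ[nhds 0] 0 := by
    filter_upwards [hLopen.mem_nhds (by simpa [L] using hA)] with t ht
    simp [hvan _ ht]
  simpa [L] using hanalytic.eqOn_zero_of_preconnected_of_eventuallyEq_zero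
    isPreconnected_univ (Set.mem_univ 0) hnear (Set.mem_univ 1)

abbrev WordsLE (g d : ℕ) := {w : List (Fin g) // w.length ≤ d}

lemma bijective_ofFn_wordsLE (g d : ℕ) :
    Function.Bijective fun s : Σ j : Fin (d + 1), Fin j → Fin g =>
      (⟨List.ofFn s.2, by simpa using Nat.lt_succ_iff.mp s.1.2⟩ : WordsLE g d) := by
  constructor
  · rintro ⟨j, f⟩ ⟨j', f'⟩ h
    obtain rfl : j = j' :=
      Fin.ext (by simpa using congrArg List.length (congrArg Subtype.val h))
    simpa using h
  · rintro ⟨w, hw⟩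
    exact ⟨⟨⟨w.length, Nat.lt_succ_of_le hw⟩, w.get⟩, Subtype.ext (List.ofFn_get w)⟩

noncomputable instance (g d : ℕ) : Fintype (WordsLE g d) :=
  Fintype.ofBijective _ (bijective_ofFn_wordsLE g d)

lemma card_wordsLE (g d : ℕ) : Fintype.card (WordsLE g d) = Ngd g d := by
  rw [← Fintype.card_of_bijective (bijective_ofFn_wordsLE g d), Fintype.card_sigma, Ngd,
    ← Fin.sum_univ_eq_sum_range]
  simp

def shiftMatrix (g d : ℕ) (k : Fin g) : Matrix (WordsLE g d) (WordsLE g d) ℝ :=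
  Matrix.of fun u v => (if u.1 = k :: v.1 then 1 else 0) + (if v.1 = k :: u.1 then 1 else 0)

lemma isSymm_shiftMatrix (g d : ℕ) (k : Fin g) : (shiftMatrix g d k).IsSymm :=
  Matrix.IsSymm.ext fun _ _ => add_comm _ _

lemma list_prod_shiftMatrix_apply (w : List (Fin g)) {u v : WordsLE g d}
    (h : w.length + v.1.length ≤ u.1.length) :
    (w.map (shiftMatrix g d)).prod u v = if u.1 = w ++ v.1 then 1 else 0 := by
  induction w generalizing u with
  | nil => simp [Matrix.one_apply, Subtype.ext_iff]
  | cons k w ih =>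
    obtain ⟨k', t, hu⟩ : ∃ k' t, u.1 = k' :: t :=
      List.exists_cons_of_length_pos (by simp at h; omega)
    have ht : t.length ≤ d := by have := u.2; simp [hu] at this; omega
    rw [List.map_cons, List.prod_cons, Matrix.mul_apply, Finset.sum_eq_single ⟨t, ht⟩]
    · have hlen : w.length + v.1.length ≤ t.length := by simp [hu] at h; omega
      rw [ih hlen]
      have : t ≠ k :: k' :: t := fun h' => by have := congrArg List.length h'; simp at this; omega
      simp only [shiftMatrix, Matrix.of_apply, hu, List.cons_append, List.cons.injEq, this,
        if_false, add_zero]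
      split_ifs <;> simp_all
    · rintro z - hz
      have h1 : u.1 ≠ k :: z.1 := fun h' => hz (Subtype.ext (by simp_all))
      by_cases h2 : z.1 = k :: u.1
      · have hlen : w.length + v.1.length ≤ z.1.length := by simp [h2] at h ⊢; omega
        have h3 : z.1 ≠ w ++ v.1 := fun h' => by
          have := congrArg List.length h'; simp [h2] at this h; omega
        simp [shiftMatrix, h1, ih hlen, h3]
      · simp [shiftMatrix, h1, h2]
    · simp

lemma eval1_shiftMatrix_apply (p : NC1 g) {u : WordsLE g d} (hp : degree1 p ≤ u.1.length) :
    eval1 p (shiftMatrix g d) u ⟨[], Nat.zero_le d⟩ = p.coeff (FreeMonoid.ofList u.1) := by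
  rw [eval1_apply, Finset.sum_eq_single (FreeMonoid.ofList u.1)]
  · rw [list_prod_shiftMatrix_apply _ (by simp)]
    simp
  · intro w hw hne
    have hlen : (FreeMonoid.toList w).length ≤ u.1.length :=
      (Finset.le_sup (f := fun w => (FreeMonoid.toList w).length) hw).trans hp
    rw [list_prod_shiftMatrix_apply _ (by simpa using hlen), if_neg, mul_zero]
    rintro h
    exact hne (by simp [h])
  · intro h
    rw [Finsupp.notMem_support_iff.mp h, zero_mul]

end NCConvexity

theorem statement7_general (g d : ℕ) (p : NC1 g) (hd : degree1 p = d)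
    (U : Set (Fin g → Matrix (Fin (Ngd g d)) (Fin (Ngd g d)) ℝ))
    (hne : U.Nonempty) (hUsym : ∀ A ∈ U, IsSymTuple A)
    (hUopen : IsOpen ((Subtype.val :
        {A : Fin g → Matrix (Fin (Ngd g d)) (Fin (Ngd g d)) ℝ // IsSymTuple A} →
        (Fin g → Matrix (Fin (Ngd g d)) (Fin (Ngd g d)) ℝ)) ⁻¹' U))
    (hvan : ∀ A ∈ U, eval1 p A = 0) :
    p = 0 := by
  let reindex := Matrix.reindexAlgEquiv ℝ ℝ (Fintype.equivFinOfCardEq (card_wordsLE g d))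
  have hshift : eval1 p (shiftMatrix g d) = 0 := by
    apply reindex.injective
    rw [map_zero, map_eval1 reindex]
    exact eval1_eq_zero_of_isSymTuple p U hne hUsym hUopen hvan
      fun k => (isSymm_shiftMatrix g d k).submatrix _
  by_contra hp
  obtain ⟨w, hw, hlen⟩ := Finset.exists_mem_eq_sup p.coeff.support
    (Finsupp.support_nonempty_iff.mpr (MonoidAlgebra.coeff_eq_zero.not.mpr hp))
    fun w => (FreeMonoid.toList w).length
  have hwd : (FreeMonoid.toList w).length = d := by rw [← hd, degree1, hlen]
  have hcoeff :=
    eval1_shiftMatrix_apply p (u := ⟨FreeMonoid.toList w, hwd.le⟩) (hd.trans hwd.symm).le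
  simp only [hshift, FreeMonoid.ofList_toList] at hcoeff
  exact Finsupp.mem_support_iff.mp hw hcoeff.symm

/-- a polynomial of degree `d` in `g` letters vanishing on a nonempty open
subset of `S_{N(g,d)}(ℝ^g)` is zero. -/
theorem statement7 (g d : ℕ) (hg : 1 ≤ g) (p : NC1 g) (hd : degree1 p = d)
    (U : Set (Fin g → Matrix (Fin (Ngd g d)) (Fin (Ngd g d)) ℝ))
    (hne : U.Nonempty) (hUsym : ∀ A ∈ U, IsSymTuple A)
    (hUopen : IsOpen ((Subtype.val :
        {A : Fin g → Matrix (Fin (Ngd g d)) (Fin (Ngd g d)) ℝ // IsSymTuple A} →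
        (Fin g → Matrix (Fin (Ngd g d)) (Fin (Ngd g d)) ℝ)) ⁻¹' U))
    (hvan : ∀ A ∈ U, eval1 p A = 0) :
    p = 0 :=
  statement7_general g d p hd U hne hUsym hUopen hvan
end

section
/- Let W be a domain in S(ℝ^g × ℝ^g) and let d_a, d_x be natural numbers with d_x ≥ 2. Then either there exist an n, a pair (A,X) ∈ W_n, and a vector v ∈ ℝ^n such that the set {m(A,X)v : m a word in the letters (a,x) with at most d_x − 2 x-letters and at most d_a a-letters} is linearly independent in ℝ^n, or there exists a nonzero noncommutative polynomial q (not necessarily symmetric) of degree at most d_a in a and at most d_x − 2 in x such that q(A,X) = 0 for every n and every (A,X) ∈ W_n. -/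
open scoped BigOperators Kronecker Matrix

namespace NCConvexity

variable {g : ℕ}

/-! For `(A, X) ∈ W` and a vector `v`, the linear relations `c` with `∑_w c_w w(A,X) v = 0` form a
subspace of one fixed finite-dimensional space, and passing to direct sums intersects these
subspaces. A minimal one is therefore contained in all of them. If it is nonzero, any nonzero
`c` in it gives the polynomial `q = ∑_w c_w w`, and `q(A,X) e_j = 0` for every `(A, X) ∈ W` and
every basis vector `e_j`. -/

theorem exists_isLeast_of_inf_mem {α : Type*} [SemilatticeInf α] [WellFoundedLT α] {S : Set α}
    (hS : S.Nonempty) (hinf : ∀ a ∈ S, ∀ b ∈ S, a ⊓ b ∈ S) : ∃ a, IsLeast S a := by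
  obtain ⟨a, haS, hmin⟩ := wellFounded_lt.has_min S hS
  refine ⟨a, haS, fun b hbS => ?_⟩
  have hle : a ⊓ b ≤ a := inf_le_left
  rw [← hle.not_lt_iff_eq.mp (hmin _ (hinf a haS b hbS))]
  exact inf_le_right

section DirectSum

variable {n m : ℕ}

def vecDirSum (v : Fin n → ℝ) (w : Fin m → ℝ) : Fin (n + m) → ℝ :=
  Sum.elim v w ∘ finSumFinEquiv.symm

lemma vecDirSum_eq_zero_iff {v : Fin n → ℝ} {w : Fin m → ℝ} :
    vecDirSum v w = 0 ↔ v = 0 ∧ w = 0 := by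
  rw [vecDirSum, Equiv.comp_symm_eq, Pi.zero_comp, ← Sum.elim_zero_zero, Sum.elim_eq_iff]

lemma linearCombination_vecDirSum {ι : Type*} [Fintype ι] (u : ι → Fin n → ℝ)
    (u' : ι → Fin m → ℝ) (c : ι → ℝ) :
    Fintype.linearCombination ℝ (fun i => vecDirSum (u i) (u' i)) c
      = vecDirSum (Fintype.linearCombination ℝ u c) (Fintype.linearCombination ℝ u' c) := by
  ext j
  rcases h : finSumFinEquiv.symm j with j' | j' <;>
    simp [vecDirSum, Fintype.linearCombination_apply, Finset.sum_apply, h]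

lemma dirSum_one :
    dirSum (1 : Matrix (Fin n) (Fin n) ℝ) (1 : Matrix (Fin m) (Fin m) ℝ) = 1 := by
  simp [dirSum, Matrix.fromBlocks_one]

lemma dirSum_mul (M M' : Matrix (Fin n) (Fin n) ℝ) (N N' : Matrix (Fin m) (Fin m) ℝ) :
    dirSum M N * dirSum M' N' = dirSum (M * M') (N * N') := by
  simp [dirSum, Matrix.submatrix_mul_equiv, Matrix.fromBlocks_multiply]

lemma dirSum_mulVec (M : Matrix (Fin n) (Fin n) ℝ) (N : Matrix (Fin m) (Fin m) ℝ)
    (v : Fin n → ℝ) (w : Fin m → ℝ) :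
    dirSum M N *ᵥ vecDirSum v w = vecDirSum (M *ᵥ v) (N *ᵥ w) := by
  rw [dirSum, Matrix.reindex_apply, Matrix.submatrix_mulVec_equiv]
  simp [vecDirSum, Function.comp_def, Matrix.fromBlocks_mulVec]

lemma listEval_tupDirSum (w : List (L2 g)) (A X : MatTuple g n) (B Y : MatTuple g m) :
    listEval w (tupDirSum A B) (tupDirSum X Y) = dirSum (listEval w A X) (listEval w B Y) := by
  induction w with
  | nil => exact dirSum_one.symm
  | cons l w ih =>
    have hl : Sum.elim (tupDirSum A B) (tupDirSum X Y) l
        = dirSum (Sum.elim A X l) (Sum.elim B Y l) := by cases l <;> rfl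
    simp only [listEval, List.map_cons, List.prod_cons] at ih ⊢
    rw [hl, ih, dirSum_mul]

end DirectSum

section Relations

variable {k d : ℕ}

noncomputable def monomialRelations (k d : ℕ) {m : Type} [Fintype m] [DecidableEq m]
    (A X : Fin g → Matrix m m ℝ) (v : m → ℝ) : Submodule ℝ (BWords g k d → ℝ) :=
  LinearMap.ker (Fintype.linearCombination ℝ fun w : BWords g k d => listEval w.1 A X *ᵥ v)

lemma monomialRelations_eq_bot_iff {m : Type} [Fintype m] [DecidableEq m]
    (A X : Fin g → Matrix m m ℝ) (v : m → ℝ) :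
    monomialRelations k d A X v = ⊥ ↔
      LinearIndependent ℝ fun w : BWords g k d => listEval w.1 A X *ᵥ v := by
  simp [monomialRelations, LinearMap.ker_eq_bot', Fintype.linearIndependent_iff, funext_iff,
    Fintype.linearCombination_apply]

lemma monomialRelations_tupDirSum {n m : ℕ} (A X : MatTuple g n) (B Y : MatTuple g m)
    (v : Fin n → ℝ) (w : Fin m → ℝ) :
    monomialRelations k d (tupDirSum A B) (tupDirSum X Y) (vecDirSum v w)
      = monomialRelations k d A X v ⊓ monomialRelations k d B Y w := by
  ext c
  simp only [monomialRelations, Submodule.mem_inf, LinearMap.mem_ker, listEval_tupDirSum,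
    dirSum_mulVec, linearCombination_vecDirSum, vecDirSum_eq_zero_iff]

noncomputable def bwordsPoly (c : BWords g k d → ℝ) : NC2 g :=
  MonoidAlgebra.ofCoeff
    (Finsupp.mapDomain (fun w : BWords g k d => FreeMonoid.ofList w.1)
      (Finsupp.equivFunOnFinite.symm c))

lemma bwordsPoly_ne_zero {c : BWords g k d → ℝ} (hc : c ≠ 0) : bwordsPoly c ≠ 0 := by
  have hinj : Function.Injective fun w : BWords g k d => FreeMonoid.ofList w.1 :=
    fun w w' h => Subtype.ext (FreeMonoid.ofList.injective h)
  intro h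
  rw [bwordsPoly, MonoidAlgebra.ofCoeff_eq_zero, ← Finsupp.mapDomain_zero,
    (Finsupp.mapDomain_injective hinj).eq_iff] at h
  exact hc (funext fun w => by simpa using DFunLike.congr_fun h w)

lemma exists_eq_of_mem_support_bwordsPoly {c : BWords g k d → ℝ} {u : Word2 g}
    (hu : u ∈ (bwordsPoly c).coeff.support) : ∃ w : BWords g k d, FreeMonoid.ofList w.1 = u := by
  classical
  obtain ⟨w, -, rfl⟩ := Finset.mem_image.mp (Finsupp.mapDomain_support hu)
  exact ⟨w, rfl⟩

lemma aDegLe_bwordsPoly (c : BWords g k d → ℝ) : aDegLe (bwordsPoly c) d := by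
  intro u hu
  obtain ⟨w, rfl⟩ := exists_eq_of_mem_support_bwordsPoly hu
  exact w.2.2

lemma xDegLe_bwordsPoly (c : BWords g k d → ℝ) : xDegLe (bwordsPoly c) k := by
  intro u hu
  obtain ⟨w, rfl⟩ := exists_eq_of_mem_support_bwordsPoly hu
  exact w.2.1

lemma eval_bwordsPoly_mulVec {m : Type} [Fintype m] [DecidableEq m] (c : BWords g k d → ℝ)
    (A X : Fin g → Matrix m m ℝ) (v : m → ℝ) :
    eval (bwordsPoly c) A X *ᵥ v
      = Fintype.linearCombination ℝ (fun w : BWords g k d => listEval w.1 A X *ᵥ v) c := by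
  rw [eval, bwordsPoly, MonoidAlgebra.coeff_ofCoeff, Finsupp.sum_mapDomain_index (by simp)
    (by simp [add_smul]), Finsupp.sum_fintype _ _ (by simp), Fintype.linearCombination_apply,
    Matrix.sum_mulVec]
  simp [wordEval, Matrix.smul_mulVec]

lemma eval_bwordsPoly_eq_zero {m : Type} [Fintype m] [DecidableEq m] {c : BWords g k d → ℝ}
    {A X : Fin g → Matrix m m ℝ} (hc : ∀ v, c ∈ monomialRelations k d A X v) :
    eval (bwordsPoly c) A X = 0 :=
  Matrix.ext_of_mulVec_single fun j => by
    rw [eval_bwordsPoly_mulVec, Matrix.zero_mulVec]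
    exact hc _

theorem exists_ne_zero_forall_mem_monomialRelations
    {W : (n : ℕ) → Set (MatTuple g n × MatTuple g n)}
    (hWsum : ∀ (n m : ℕ) (A X : MatTuple g n) (B Y : MatTuple g m),
      (A, X) ∈ W n → (B, Y) ∈ W m → (tupDirSum A B, tupDirSum X Y) ∈ W (n + m))
    (hdep : ∀ (n : ℕ) (A X : MatTuple g n) (v : Fin n → ℝ), (A, X) ∈ W n →
      ¬ LinearIndependent ℝ fun w : BWords g k d => listEval w.1 A X *ᵥ v) :
    ∃ c : BWords g k d → ℝ, c ≠ 0 ∧ ∀ (n : ℕ) (A X : MatTuple g n) (v : Fin n → ℝ),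
      (A, X) ∈ W n → c ∈ monomialRelations k d A X v := by
  set S := {K | ∃ (n : ℕ) (A X : MatTuple g n) (v : Fin n → ℝ),
    (A, X) ∈ W n ∧ monomialRelations k d A X v = K}
  rcases S.eq_empty_or_nonempty with hS | hS
  · refine ⟨Pi.single ⟨[], by simp [xCountL, aCountL]⟩ 1, by simp, fun n A X v hAX => ?_⟩
    exact (Set.eq_empty_iff_forall_notMem.mp hS _ ⟨n, A, X, v, hAX, rfl⟩).elim
  have hinf : ∀ K ∈ S, ∀ K' ∈ S, K ⊓ K' ∈ S := by
    rintro _ ⟨n, A, X, v, hAX, rfl⟩ _ ⟨n', B, Y, w, hBY, rfl⟩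
    exact ⟨n + n', _, _, _, hWsum n n' A X B Y hAX hBY, monomialRelations_tupDirSum A X B Y v w⟩
  obtain ⟨_, ⟨n, A, X, v, hAX, rfl⟩, hleast⟩ := exists_isLeast_of_inf_mem hS hinf
  obtain ⟨c, hc, hc0⟩ := (Submodule.ne_bot_iff _).mp
    (mt (monomialRelations_eq_bot_iff A X v).mp (hdep n A X v hAX))
  exact ⟨c, hc0, fun n' A' X' v' hAX' => hleast ⟨n', A', X', v', hAX', rfl⟩ hc⟩

end Relations

end NCConvexity

open NCConvexity

theorem statement9_general (g : ℕ)
    (W : (n : ℕ) → Set (MatTuple g n × MatTuple g n))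
    (hWsum : ∀ (n m : ℕ) (A X : MatTuple g n) (B Y : MatTuple g m),
      (A, X) ∈ W n → (B, Y) ∈ W m → (tupDirSum A B, tupDirSum X Y) ∈ W (n + m))
    (da dx : ℕ) :
    (∃ (n : ℕ) (A X : MatTuple g n) (v : Fin n → ℝ), (A, X) ∈ W n ∧
      LinearIndependent ℝ (fun m : BWords g (dx - 2) da => (listEval m.1 A X).mulVec v)) ∨
    (∃ q : NC2 g, q ≠ 0 ∧ aDegLe q da ∧ xDegLe q (dx - 2) ∧
      ∀ (n : ℕ), ∀ AX ∈ W n, eval q AX.1 AX.2 = 0) := by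
  by_cases hind : ∃ (n : ℕ) (A X : MatTuple g n) (v : Fin n → ℝ), (A, X) ∈ W n ∧
      LinearIndependent ℝ (fun m : BWords g (dx - 2) da => (listEval m.1 A X).mulVec v)
  · exact .inl hind
  push Not at hind
  obtain ⟨c, hc0, hc⟩ := exists_ne_zero_forall_mem_monomialRelations hWsum hind
  refine .inr ⟨bwordsPoly c, bwordsPoly_ne_zero hc0, aDegLe_bwordsPoly c, xDegLe_bwordsPoly c, ?_⟩
  rintro n ⟨A, X⟩ hAX
  exact eval_bwordsPoly_eq_zero fun v => hc n A X v hAX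

/-- on a domain `W`, either some `(A,X) ∈ W` and vector `v` make the monomials
`m(A,X)v` (with `deg_x m ≤ d_x − 2`, `deg_a m ≤ d_a`) linearly independent, or some nonzero
polynomial of degree at most `d_a` in `a` and `d_x − 2` in `x` vanishes on `W`. -/
theorem statement9 (g : ℕ) (hg : 1 ≤ g)
    (W : (n : ℕ) → Set (MatTuple g n × MatTuple g n))
    (hWsym : ∀ n, ∀ AX ∈ W n, IsSymTuple AX.1 ∧ IsSymTuple AX.2)
    (hWsum : ∀ (n m : ℕ) (A X : MatTuple g n) (B Y : MatTuple g m),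
      (A, X) ∈ W n → (B, Y) ∈ W m → (tupDirSum A B, tupDirSum X Y) ∈ W (n + m))
    (da dx : ℕ) (hdx : 2 ≤ dx) :
    (∃ (n : ℕ) (A X : MatTuple g n) (v : Fin n → ℝ), (A, X) ∈ W n ∧
      LinearIndependent ℝ (fun m : BWords g (dx - 2) da => (listEval m.1 A X).mulVec v)) ∨
    (∃ q : NC2 g, q ≠ 0 ∧ aDegLe q da ∧ xDegLe q (dx - 2) ∧
      ∀ (n : ℕ), ∀ AX ∈ W n, eval q AX.1 AX.2 = 0) :=
  statement9_general g W hWsum da dx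
end

section
/- Let q(a,x)[h] be a symmetric noncommutative polynomial in the 3g letters (a,x,h) that has degree ℓ in x and is homogeneous of degree two in h, and let Z(a,x) be its middle matrix with respect to the border vector. Then for every n and every (A,X) ∈ S_n(ℝ^g) × S_n(ℝ^g), the number of positive (respectively, negative) eigenvalues of the symmetric matrix Z(A,X), counted with multiplicity, satisfies μ_±(Z(A,X)) ≤ n·σ_±(q). -/
/-!
An `h`-linear polynomial `f` is uniquely `f = Σ_β u_β(a,x) h_j m` over pairs `β = (j, m)`, and a
polynomial `q = Σ (h_j m)ᵀ P_{ββ'} (h_j' m')` determines every `P_{ββ'}`, since a word with two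
`h`-letters determines `β` and `β'`. So an SDS decomposition `q = Σ f_iᵀ f_i - Σ r_lᵀ r_l` forces
`Z = Fᵀ F - Rᵀ R` with `F = (u_β(f_i))`, `R = (u_β(r_l))`; at symmetric `(A, X)` the involution
becomes the matrix transpose, so `Z(A, X) = F(A, X)ᵀ F(A, X) - R(A, X)ᵀ R(A, X)`, where `F(A, X)`
has `nσ` rows. The quadratic form of `Z(A, X)` is positive on the span of the eigenvectors of its
positive eigenvalues and `≤ 0` on `ker F(A, X)`, hence `μ₊ ≤ nσ`; symmetrically `μ₋ ≤ nτ`.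
Minimal SDS decompositions exist because polarising `q = Σ_α V_αᵀ (Σ_β Z_{αβ} V_β)` gives one.
-/

open scoped BigOperators Kronecker Matrix

lemma List.append_cons_inj_of_forall_of_not {α : Type*} {p : α → Prop} {x₁ x₂ z₁ z₂ : List α}
    {a₁ a₂ : α} (hx₁ : ∀ a ∈ x₁, p a) (hx₂ : ∀ a ∈ x₂, p a) (h₁ : ¬p a₁) (h₂ : ¬p a₂)
    (h : x₁ ++ a₁ :: z₁ = x₂ ++ a₂ :: z₂) : x₁ = x₂ ∧ a₁ = a₂ ∧ z₁ = z₂ := by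
  induction x₁ generalizing x₂ with
  | nil =>
    cases x₂ with
    | nil => simpa using h
    | cons b x₂ => obtain ⟨rfl, -⟩ := List.cons.inj h; exact absurd (hx₂ _ (by simp)) h₁
  | cons b x₁ ih =>
    cases x₂ with
    | nil => obtain ⟨rfl, -⟩ := List.cons.inj h; exact absurd (hx₁ _ (by simp)) h₂
    | cons c x₂ =>
      simp only [List.cons_append, List.cons.injEq] at h
      obtain ⟨rfl, rfl, rfl⟩ := ih (fun a ha => hx₁ a (by simp [ha]))
        (fun a ha => hx₂ a (by simp [ha])) h.2
      simp [h.1]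

section InertiaBound
open Matrix

/-- The eigenvectors of the counted eigenvalues span a space on which `B` is injective. -/
lemma Matrix.IsHermitian.card_filter_eigenvalues_le {m ι : Type*} [Fintype m] [DecidableEq m]
    [Fintype ι] {S : Matrix m m ℝ} (hS : S.IsHermitian) (B : Matrix ι m ℝ) (s : ℝ)
    (hker : ∀ v, B *ᵥ v = 0 → s * (v ⬝ᵥ S *ᵥ v) ≤ 0) :
    (Finset.univ.filter fun i => 0 < s * hS.eigenvalues i).card ≤ Fintype.card ι := by
  set P := Finset.univ.filter fun i => 0 < s * hS.eigenvalues i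
  by_contra! hlt
  have hdep : ¬LinearIndependent ℝ fun i : P => B *ᵥ ⇑(hS.eigenvectorBasis i) := fun hli => by
    have := hli.fintype_card_le_finrank
    simp only [Fintype.card_coe, Module.finrank_fintype_fun_eq_card] at this
    omega
  obtain ⟨c, hc, i₀, hi₀⟩ := Fintype.not_linearIndependent_iff.mp hdep
  have hb : Orthonormal ℝ fun i : P => hS.eigenvectorBasis i :=
    hS.eigenvectorBasis.orthonormal.comp _ Subtype.val_injective
  set v := ∑ i : P, c i • hS.eigenvectorBasis i
  have hBv : B *ᵥ v = 0 := by
    simpa [v, mulVec_sum, mulVec_smul] using hc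
  have hSv : S *ᵥ v = ⇑(∑ i : P, (c i * hS.eigenvalues i) • hS.eigenvectorBasis i) := by
    simp [v, mulVec_sum, mulVec_smul, hS.mulVec_eigenvectorBasis, smul_smul]
  have hquad : v ⬝ᵥ S *ᵥ v = ∑ i : P, c i * (c i * hS.eigenvalues i) := by
    have := hb.inner_sum c (fun i => c i * hS.eigenvalues i) Finset.univ
    rw [EuclideanSpace.inner_eq_star_dotProduct] at this
    rw [hSv]
    simpa [v, dotProduct_comm] using this
  refine (hker _ hBv).not_gt ?_
  rw [hquad, Finset.mul_sum]
  refine Finset.sum_pos' (fun i _ => ?_) ⟨i₀, Finset.mem_univ _, ?_⟩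
  · have := (Finset.mem_filter.mp i.2).2
    nlinarith [sq_nonneg (c i)]
  · have := (Finset.mem_filter.mp i₀.2).2
    have : 0 < c i₀ ^ 2 := by positivity
    nlinarith

end InertiaBound

namespace NCConvexity

open MonoidAlgebra

section GramDifference

open Matrix

lemma isHermitian_gramSub {m ι κ : Type*} [Fintype ι] [Fintype κ] (B : Matrix ι m ℝ)
    (C : Matrix κ m ℝ) : (Bᵀ * B - Cᵀ * C).IsHermitian :=
  (isHermitian_conjTranspose_mul_self B).sub (isHermitian_conjTranspose_mul_self C)

lemma dotProduct_gramSub_mulVec {m ι κ : Type*} [Fintype m] [Fintype ι] [Fintype κ]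
    (B : Matrix ι m ℝ) (C : Matrix κ m ℝ) (v : m → ℝ) :
    v ⬝ᵥ (Bᵀ * B - Cᵀ * C) *ᵥ v = (B *ᵥ v) ⬝ᵥ (B *ᵥ v) - (C *ᵥ v) ⬝ᵥ (C *ᵥ v) := by
  rw [sub_mulVec, dotProduct_sub, ← mulVec_mulVec, ← mulVec_mulVec, dotProduct_mulVec v Bᵀ,
    dotProduct_mulVec v Cᵀ, vecMul_transpose, vecMul_transpose]

lemma posEig_gramSub_le {m ι κ : Type} [Fintype m] [DecidableEq m] [Fintype ι] [Fintype κ]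
    (B : Matrix ι m ℝ) (C : Matrix κ m ℝ) : posEig (Bᵀ * B - Cᵀ * C) ≤ Fintype.card ι := by
  rw [posEig, dif_pos (isHermitian_gramSub B C)]
  simpa using (isHermitian_gramSub B C).card_filter_eigenvalues_le B 1 fun v hv => by
    simpa [dotProduct_gramSub_mulVec, hv] using dotProduct_self_star_nonneg (C *ᵥ v)

lemma negEig_gramSub_le {m ι κ : Type} [Fintype m] [DecidableEq m] [Fintype ι] [Fintype κ]
    (B : Matrix ι m ℝ) (C : Matrix κ m ℝ) : negEig (Bᵀ * B - Cᵀ * C) ≤ Fintype.card κ := by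
  rw [negEig, dif_pos (isHermitian_gramSub B C)]
  simpa using (isHermitian_gramSub B C).card_filter_eigenvalues_le C (-1) fun v hv => by
    simpa [dotProduct_gramSub_mulVec, hv] using dotProduct_self_star_nonneg (B *ᵥ v)

end GramDifference

section MonoidAlgebra

variable {R : Type*} [CommSemiring R]

lemma mapDomain_mul_single_one {M N : Type*} [Monoid M] (f : N → M) (x : MonoidAlgebra R N)
    (b : M) : mapDomain f x * single b 1 = mapDomain (fun m => f m * b) x := by
  induction x using MonoidAlgebra.induction_linear with
  | zero => simp
  | add x y hx hy => rw [mapDomain_add, add_mul, hx, hy, mapDomain_add]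
  | single m c => rw [mapDomain_single, mapDomain_single, single_mul_single, mul_one]

lemma single_one_mul_mapDomain {M N : Type*} [Monoid M] (f : N → M) (x : MonoidAlgebra R N)
    (a : M) : single a 1 * mapDomain f x = mapDomain (fun m => a * f m) x := by
  induction x using MonoidAlgebra.induction_linear with
  | zero => simp
  | add x y hx hy => rw [mapDomain_add, mul_add, hx, hy, mapDomain_add]
  | single m c => rw [mapDomain_single, mapDomain_single, single_mul_single, one_mul]

variable {α : Type*}

noncomputable def reverseLin :
    MonoidAlgebra R (FreeMonoid α) →ₗ[R] MonoidAlgebra R (FreeMonoid α) :=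
  mapDomainLinearMap R R FreeMonoid.reverse

lemma reverseLin_single (w : FreeMonoid α) (c : R) :
    reverseLin (single w c) = single w.reverse c :=
  mapDomain_single

lemma reverseLin_mul (p q : MonoidAlgebra R (FreeMonoid α)) :
    reverseLin (p * q) = reverseLin q * reverseLin p := by
  induction p using MonoidAlgebra.induction_linear with
  | zero => simp
  | add a b ha hb => rw [add_mul, map_add, map_add, ha, hb, mul_add]
  | single w c =>
    induction q using MonoidAlgebra.induction_linear with
    | zero => simp
    | add a b ha hb => rw [mul_add, map_add, map_add, ha, hb, add_mul]
    | single v d =>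
      simp only [single_mul_single, reverseLin_single, FreeMonoid.reverse_mul, mul_comm c d]

lemma reverseLin_reverseLin (p : MonoidAlgebra R (FreeMonoid α)) :
    reverseLin (reverseLin p) = p := by
  induction p using MonoidAlgebra.induction_linear with
  | zero => simp
  | add a b ha hb => rw [map_add, map_add, ha, hb]
  | single w c => rw [reverseLin_single, reverseLin_single, FreeMonoid.reverse_reverse]

end MonoidAlgebra

variable {g ℓ d : ℕ}

section Transpose

lemma ncT_eq_reverseLin : ncT (g := g) = reverseLin := rfl

lemma ncT3_eq_reverseLin : ncT3 (g := g) = reverseLin := rfl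

lemma ncT3_mul (p q : NC3 g) : ncT3 (p * q) = ncT3 q * ncT3 p := reverseLin_mul p q

lemma ncT3_ncT3 (p : NC3 g) : ncT3 (ncT3 p) = p := reverseLin_reverseLin p

lemma ncT3_smul (c : ℝ) (p : NC3 g) : ncT3 (c • p) = c • ncT3 p := map_smul reverseLin c p

lemma ncT3_sum {ι : Type*} (s : Finset ι) (F : ι → NC3 g) :
    ncT3 (∑ i ∈ s, F i) = ∑ i ∈ s, ncT3 (F i) :=
  map_sum reverseLin F s

lemma emb23_eq_mapDomain (p : NC2 g) :
    emb23 p = mapDomain (FreeMonoid.map (Sum.map id Sum.inl)) p := by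
  have hlift : FreeMonoid.lift (fun l => ltr3 (Sum.map id Sum.inl l)) =
      (of ℝ (Word3 g)).comp (FreeMonoid.map (Sum.map id Sum.inl)) :=
    FreeMonoid.hom_eq fun _ => rfl
  induction p using MonoidAlgebra.induction_linear with
  | zero => simp
  | add a b ha hb => rw [map_add, ha, hb, mapDomain_add]
  | single w c =>
    rw [emb23, lift_single, hlift, mapDomain_single, MonoidHom.comp_apply, of_apply,
      smul_single', mul_one]

lemma ncT3_emb23 (p : NC2 g) : ncT3 (emb23 p) = emb23 (ncT p) := by
  rw [ncT3_eq_reverseLin, ncT_eq_reverseLin]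
  induction p using MonoidAlgebra.induction_linear with
  | zero => simp
  | add a b ha hb => simp only [map_add, ha, hb]
  | single w c =>
    rw [emb23_eq_mapDomain, emb23_eq_mapDomain, mapDomain_single, reverseLin_single,
      reverseLin_single, mapDomain_single]
    congr 1
    exact FreeMonoid.toList.injective (List.map_reverse ..).symm

end Transpose

section Words

/-- `(j, m)` stands for the border monomial `h_j m`, for an arbitrary word `m` in `(a, x)`. -/
abbrev HMon (g : ℕ) := Fin g × List (L2 g)

def hLetter (j : Fin g) : L3 g := .inr (.inr j)

def isHLetter : L3 g → Bool
  | .inr (.inr _) => true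
  | _ => false

lemma isHLetter_hLetter (j : Fin g) : isHLetter (hLetter j) = true := rfl

lemma isHLetter_embLetter (l : L2 g) : isHLetter (Sum.map id Sum.inl l) = false := by
  cases l <;> rfl

lemma hCount3_eq_countP (v : Word3 g) : hCount3 v = v.toList.countP isHLetter := rfl

noncomputable def hMonWord (β : HMon g) : Word3 g :=
  FreeMonoid.ofList (hLetter β.1 :: β.2.map (Sum.map id Sum.inl))

noncomputable def hWord (β : HMon g) (u : Word2 g) : Word3 g :=
  FreeMonoid.map (Sum.map id Sum.inl) u * hMonWord β

/-- The word `mᵀ h_j u h_j' m'`. -/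
noncomputable def sandwichWord (β β' : HMon g) (u : Word2 g) : Word3 g :=
  (hMonWord β).reverse * hWord β' u

lemma injective_embLetter : Function.Injective (Sum.map id Sum.inl : L2 g → L3 g) :=
  Sum.map_injective.2 ⟨Function.injective_id, Sum.inl_injective⟩

lemma hLetter_notMem_range (j : Fin g) :
    hLetter j ∉ Set.range (Sum.map id Sum.inl : L2 g → L3 g) := by
  simp [hLetter]

lemma mem_range_of_mem_map {a : L3 g} {l : List (L2 g)} (h : a ∈ l.map (Sum.map id Sum.inl)) :
    a ∈ Set.range (Sum.map id Sum.inl : L2 g → L3 g) := by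
  obtain ⟨b, -, rfl⟩ := List.mem_map.mp h
  exact ⟨b, rfl⟩

lemma mem_range_embLetter {a : L3 g} (ha : isHLetter a = false) :
    a ∈ Set.range (Sum.map id Sum.inl : L2 g → L3 g) := by
  rcases a with i | i | j
  exacts [⟨.inl i, rfl⟩, ⟨.inr i, rfl⟩, absurd ha (by simp [isHLetter])]

lemma mem_range_map_embLetter {l : List (L3 g)} (hl : l.countP isHLetter = 0) :
    l ∈ Set.range (List.map (Sum.map id Sum.inl : L2 g → L3 g)) :=
  Set.range_list_map _ ▸ fun x hx =>
    mem_range_embLetter (by simpa using List.countP_eq_zero.mp hl x hx)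

lemma toList_hWord (β : HMon g) (u : Word2 g) :
    (hWord β u).toList = u.toList.map (Sum.map id Sum.inl) ++
      hLetter β.1 :: β.2.map (Sum.map id Sum.inl) := by
  simp [hWord, hMonWord]

lemma toList_sandwichWord (β β' : HMon g) (u : Word2 g) :
    (sandwichWord β β' u).toList =
      (β.2.map (Sum.map id Sum.inl)).reverse ++ hLetter β.1 :: (hWord β' u).toList := by
  have hrev : ∀ w : Word3 g, w.reverse.toList = w.toList.reverse := fun _ => rfl
  simp [sandwichWord, hMonWord, hrev]

lemma hCount3_hWord (β : HMon g) (u : Word2 g) : hCount3 (hWord β u) = 1 := by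
  rw [hCount3_eq_countP, toList_hWord, List.countP_append, List.countP_cons, List.countP_map,
    List.countP_map]
  simp [Function.comp_def, isHLetter_hLetter, isHLetter_embLetter]

lemma hWord_inj {β γ : HMon g} {u v : Word2 g} (h : hWord β u = hWord γ v) : β = γ ∧ u = v := by
  have h' := congrArg FreeMonoid.toList h
  rw [toList_hWord, toList_hWord] at h'
  obtain ⟨hu, hj, hm⟩ := List.append_cons_inj_of_forall_of_not (fun _ => mem_range_of_mem_map)
    (fun _ => mem_range_of_mem_map) (hLetter_notMem_range _) (hLetter_notMem_range _) h'
  refine ⟨Prod.ext (by simpa [hLetter] using hj) ?_, FreeMonoid.toList.injective ?_⟩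
  · exact List.map_injective_iff.mpr injective_embLetter hm
  · exact List.map_injective_iff.mpr injective_embLetter hu

lemma sandwichWord_inj {β β' γ γ' : HMon g} {u v : Word2 g}
    (h : sandwichWord β β' u = sandwichWord γ γ' v) : β = γ ∧ β' = γ' ∧ u = v := by
  have h' := congrArg FreeMonoid.toList h
  rw [toList_sandwichWord, toList_sandwichWord] at h'
  obtain ⟨hm, hj, hw⟩ := List.append_cons_inj_of_forall_of_not
    (p := (· ∈ Set.range (Sum.map id Sum.inl)))
    (fun _ ha => mem_range_of_mem_map (List.mem_reverse.mp ha))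
    (fun _ ha => mem_range_of_mem_map (List.mem_reverse.mp ha))
    (hLetter_notMem_range _) (hLetter_notMem_range _) h'
  refine ⟨Prod.ext (by simpa [hLetter] using hj) ?_, hWord_inj (FreeMonoid.toList.injective hw)⟩
  exact List.map_injective_iff.mpr injective_embLetter (List.reverse_injective hm)

lemma exists_hWord_eq {v : Word3 g} (hv : hCount3 v = 1) : ∃ β u, hWord β u = v := by
  rw [hCount3_eq_countP] at hv
  obtain ⟨a, ha, hHa⟩ := List.countP_pos_iff.mp (hv ▸ Nat.one_pos)
  obtain ⟨s, t, hst⟩ := List.append_of_mem ha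
  rw [hst, List.countP_append, List.countP_cons, if_pos hHa] at hv
  obtain ⟨s', hs'⟩ := mem_range_map_embLetter (l := s) (by omega)
  obtain ⟨t', ht'⟩ := mem_range_map_embLetter (l := t) (by omega)
  rcases a with i | i | j
  · simp [isHLetter] at hHa
  · simp [isHLetter] at hHa
  refine ⟨(j, t'), FreeMonoid.ofList s', FreeMonoid.toList.injective ?_⟩
  rw [toList_hWord, hst, ← hs', ← ht']
  rfl

end Words

section BorderProducts

lemma bmon_eq_single (β : HMon g) : bmon β.1 β.2 = single (hMonWord β) 1 := rfl

lemma emb23_mul_bmon (p : NC2 g) (β : HMon g) :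
    emb23 p * bmon β.1 β.2 = mapDomain (hWord β) p := by
  rw [emb23_eq_mapDomain, bmon_eq_single, mapDomain_mul_single_one]
  rfl

lemma ncT3_bmon_mul_emb23_mul_bmon (p : NC2 g) (β β' : HMon g) :
    ncT3 (bmon β.1 β.2) * emb23 p * bmon β'.1 β'.2 = mapDomain (sandwichWord β β') p := by
  rw [mul_assoc, emb23_mul_bmon, bmon_eq_single, ncT3_eq_reverseLin, reverseLin_single,
    single_one_mul_mapDomain]
  rfl

lemma ncT3_emb23_mul_bmon_mul (a b : NC2 g) (β β' : HMon g) :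
    ncT3 (emb23 a * bmon β.1 β.2) * (emb23 b * bmon β'.1 β'.2) =
      mapDomain (sandwichWord β β') (ncT a * b) := by
  rw [← ncT3_bmon_mul_emb23_mul_bmon, ncT3_mul, ncT3_emb23, map_mul]
  simp only [mul_assoc]

def hHomogSubmodule (k : ℕ) : Submodule ℝ (NC3 g) where
  carrier := {p | hHomog3 p k}
  add_mem' {p q} hp hq v hv := by
    classical
    exact (Finset.mem_union.mp (Finsupp.support_add hv)).elim (hp v) (hq v)
  zero_mem' v hv := by simp at hv
  smul_mem' c p hp v hv := hp v (Finsupp.support_smul hv)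

lemma emb23_mul_bmon_mem (p : NC2 g) (β : HMon g) :
    emb23 p * bmon β.1 β.2 ∈ hHomogSubmodule (g := g) 1 := fun v hv => by
  classical
  rw [emb23_mul_bmon] at hv
  obtain ⟨u, -, rfl⟩ := Finset.mem_image.mp (Finsupp.mapDomain_support hv)
  exact hCount3_hWord β u

lemma bmon_mem (β : HMon g) : bmon β.1 β.2 ∈ hHomogSubmodule (g := g) 1 := by
  simpa using emb23_mul_bmon_mem 1 β

end BorderProducts

section Coefficients

/-- The coefficient `u_β` of `h_j m` in the decomposition `f = Σ_β u_β h_j m` of an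
`h`-linear `f`, where `β = (j, m)`. -/
noncomputable def hCoeff (β : HMon g) (f : NC3 g) : NC2 g :=
  comapDomain (hWord β) (fun _ _ h => (hWord_inj h).2) f

/-- The coefficient `P_{ββ'}` of `q = Σ (h_j m)ᵀ P_{ββ'} (h_j' m')`. -/
noncomputable def sandwichCoeff (β β' : HMon g) : NC3 g →+ NC2 g :=
  comapDomainAddMonoidHom (sandwichWord β β') (fun _ _ h => (sandwichWord_inj h).2.2)

lemma coeff_sandwichCoeff (β β' : HMon g) (q : NC3 g) (u : Word2 g) :
    (sandwichCoeff β β' q).coeff u = q.coeff (sandwichWord β β' u) := rfl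

lemma sandwichCoeff_mapDomain (β β' γ γ' : HMon g) (p : NC2 g) :
    sandwichCoeff β β' (mapDomain (sandwichWord γ γ') p) = if γ = β ∧ γ' = β' then p else 0 := by
  ext u
  rw [coeff_sandwichCoeff, coeff_mapDomain]
  split_ifs with h
  · obtain ⟨rfl, rfl⟩ := h
    exact Finsupp.mapDomain_apply (fun _ _ h => (sandwichWord_inj h).2.2) _ _
  · refine Finsupp.mapDomain_of_notMem_range _ _ fun ⟨v, hv⟩ => h ?_
    obtain ⟨h₁, h₂, -⟩ := sandwichWord_inj hv
    exact ⟨h₁, h₂⟩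

lemma finite_setOf_hCoeff_ne_zero (f : NC3 g) : {β | hCoeff β f ≠ 0}.Finite := by
  refine (f.coeff.support.finite_toSet.biUnion (t := fun v => {β | ∃ u, hWord β u = v})
    fun v _ => Set.Subsingleton.finite ?_).subset fun β hβ => ?_
  · rintro β ⟨u, rfl⟩ γ ⟨w, hw⟩
    exact (hWord_inj hw).1.symm
  · obtain ⟨u, hu⟩ : ∃ u, (hCoeff β f).coeff u ≠ 0 := by
      by_contra! h
      exact hβ (MonoidAlgebra.ext (Finsupp.ext h))
    exact Set.mem_biUnion (Finsupp.mem_support_iff.mpr hu) ⟨u, rfl⟩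

open scoped Classical in
lemma coeff_emb23_hCoeff_mul_bmon (β : HMon g) (f : NC3 g) (v : Word3 g) :
    (emb23 (hCoeff β f) * bmon β.1 β.2).coeff v =
      if ∃ u, hWord β u = v then f.coeff v else 0 := by
  rw [emb23_mul_bmon, coeff_mapDomain]
  split_ifs with h
  · obtain ⟨u, rfl⟩ := h
    exact Finsupp.mapDomain_apply (fun _ _ h => (hWord_inj h).2) _ _
  · exact Finsupp.mapDomain_of_notMem_range _ _ h

lemma eq_sum_emb23_hCoeff_mul_bmon {f : NC3 g} (hf : hHomog3 f 1) {T : Finset (HMon g)}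
    (hT : ∀ β ∉ T, hCoeff β f = 0) : f = ∑ β ∈ T, emb23 (hCoeff β f) * bmon β.1 β.2 := by
  ext v
  simp only [coeff_sum, Finset.sum_apply', coeff_emb23_hCoeff_mul_bmon]
  by_cases hv : v ∈ f.coeff.support
  · obtain ⟨β, u, rfl⟩ := exists_hWord_eq (hf _ hv)
    have hβ : β ∈ T := by
      by_contra h
      exact Finsupp.mem_support_iff.mp hv (congrArg (·.coeff u) (hT β h))
    have hiff : ∀ γ, (∃ w, hWord γ w = hWord β u) ↔ β = γ :=
      fun γ => ⟨fun ⟨_, hw⟩ => (hWord_inj hw).1.symm, fun h => ⟨u, h ▸ rfl⟩⟩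
    simp only [hiff, Finset.sum_ite_eq, if_pos hβ]
  · simp [Finsupp.notMem_support_iff.mp hv]

lemma sandwichCoeff_ncT3_mul {f f' : NC3 g} (hf : hHomog3 f 1) (hf' : hHomog3 f' 1)
    (β β' : HMon g) : sandwichCoeff β β' (ncT3 f * f') = ncT (hCoeff β f) * hCoeff β' f' := by
  classical
  set T : Finset (HMon g) := insert β (insert β'
    ((finite_setOf_hCoeff_ne_zero f).union (finite_setOf_hCoeff_ne_zero f')).toFinset)
  have hT : ∀ F ∈ ({f, f'} : Set (NC3 g)), ∀ γ ∉ T, hCoeff γ F = 0 := by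
    rintro F hF γ hγ
    by_contra h
    simp only [T, Finset.mem_insert, Set.Finite.mem_toFinset, Set.mem_union,
      Set.mem_ofPred_eq] at hγ
    rcases hF with rfl | rfl <;> tauto
  conv_lhs => rw [eq_sum_emb23_hCoeff_mul_bmon hf (hT f (by simp)),
    eq_sum_emb23_hCoeff_mul_bmon hf' (hT f' (by simp))]
  have hβ : β ∈ T := Finset.mem_insert_self _ _
  have hβ' : β' ∈ T := Finset.mem_insert_of_mem (Finset.mem_insert_self _ _)
  simp only [ncT3_sum, Finset.sum_mul_sum, ncT3_emb23_mul_bmon_mul, map_sum,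
    sandwichCoeff_mapDomain, ite_and, Finset.sum_ite_irrel, Finset.sum_const_zero,
    Finset.sum_ite_eq', if_pos hβ, if_pos hβ']

end Coefficients

section MiddleMatrix

def BIdx.toHMon (α : BIdx g ℓ d) : HMon g := (α.1, α.2.1)

lemma BIdx.toHMon_injective : Function.Injective (BIdx.toHMon (g := g) (ℓ := ℓ) (d := d)) := by
  rintro ⟨j, u⟩ ⟨k, v⟩ h
  simp only [BIdx.toHMon, Prod.mk.injEq] at h
  rw [h.1, Subtype.ext h.2]

lemma borderVec_eq_bmon (α : BIdx g ℓ d) : borderVec g ℓ d α = bmon α.toHMon.1 α.toHMon.2 := rfl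

lemma sandwichCoeff_of_eq_middle {q : NC3 g} {Z : Matrix (BIdx g ℓ d) (BIdx g ℓ d) (NC2 g)}
    (hZ : q = ∑ α, ∑ β, ncT3 (borderVec g ℓ d α) * emb23 (Z α β) * borderVec g ℓ d β)
    (α β : BIdx g ℓ d) : sandwichCoeff α.toHMon β.toHMon q = Z α β := by
  classical
  rw [hZ]
  simp only [map_sum, borderVec_eq_bmon, ncT3_bmon_mul_emb23_mul_bmon, sandwichCoeff_mapDomain,
    BIdx.toHMon_injective.eq_iff, ite_and, Finset.sum_ite_irrel, Finset.sum_const_zero,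
    Finset.sum_ite_eq', Finset.mem_univ, if_true]

lemma middle_eq_of_sds {q : NC3 g} {Z : Matrix (BIdx g ℓ d) (BIdx g ℓ d) (NC2 g)}
    (hZ : q = ∑ α, ∑ β, ncT3 (borderVec g ℓ d α) * emb23 (Z α β) * borderVec g ℓ d β)
    {κ ν : Type*} [Fintype κ] [Fintype ν] {f : κ → NC3 g} {r : ν → NC3 g}
    (hf : ∀ j, hHomog3 (f j) 1) (hr : ∀ l, hHomog3 (r l) 1)
    (hsds : q = (∑ j, ncT3 (f j) * f j) - ∑ l, ncT3 (r l) * r l) (α β : BIdx g ℓ d) :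
    Z α β = (∑ j, ncT (hCoeff α.toHMon (f j)) * hCoeff β.toHMon (f j)) -
      ∑ l, ncT (hCoeff α.toHMon (r l)) * hCoeff β.toHMon (r l) := by
  rw [← sandwichCoeff_of_eq_middle hZ, hsds, map_sub, map_sum, map_sum]
  simp only [sandwichCoeff_ncT3_mul (hf _) (hf _), sandwichCoeff_ncT3_mul (hr _) (hr _)]

lemma isSDS_of_eq_sum_ncT3_mul {q : NC3 g} (hq : IsSymPoly3 q) {ι : Type*} [Fintype ι]
    {V R : ι → NC3 g} (hV : ∀ i, hHomog3 (V i) 1) (hR : ∀ i, hHomog3 (R i) 1)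
    (h : q = ∑ i, ncT3 (V i) * R i) : IsSDS q (Fintype.card ι) (Fintype.card ι) := by
  have h' : q = ∑ i, ncT3 (R i) * V i := by
    conv_lhs => rw [← hq, h]
    simp only [ncT3_sum, ncT3_mul, ncT3_ncT3]
  let e := (Fintype.equivFin ι).symm
  refine ⟨fun j => (2⁻¹ : ℝ) • (V (e j) + R (e j)), fun j => (2⁻¹ : ℝ) • (V (e j) - R (e j)),
    fun j => (hHomogSubmodule 1).smul_mem _ (add_mem (hV _) (hR _)),
    fun j => (hHomogSubmodule 1).smul_mem _ (sub_mem (hV _) (hR _)), ?_⟩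
  have hpolar : ∀ i, ncT3 ((2⁻¹ : ℝ) • (V i + R i)) * ((2⁻¹ : ℝ) • (V i + R i)) -
      ncT3 ((2⁻¹ : ℝ) • (V i - R i)) * ((2⁻¹ : ℝ) • (V i - R i)) =
      (2⁻¹ : ℝ) • (ncT3 (V i) * R i + ncT3 (R i) * V i) := fun i => by
    have hexpand : ncT3 (V i + R i) * (V i + R i) - ncT3 (V i - R i) * (V i - R i) =
        (2 : ℝ) • (ncT3 (V i) * R i + ncT3 (R i) * V i) := by
      simp only [ncT3_eq_reverseLin, map_add, map_sub, two_smul]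
      noncomm_ring
    rw [ncT3_smul, ncT3_smul, smul_mul_smul_comm, smul_mul_smul_comm, ← smul_sub, hexpand,
      smul_smul]
    norm_num
  rw [← Finset.sum_sub_distrib]
  simp only [hpolar]
  rw [Equiv.sum_comp e (fun i => (2⁻¹ : ℝ) • (ncT3 (V i) * R i + ncT3 (R i) * V i)),
    ← Finset.smul_sum, Finset.sum_add_distrib, ← h, ← h', ← two_smul ℝ q, smul_smul]
  norm_num

lemma isSDS_of_eq_middle {q : NC3 g} (hq : IsSymPoly3 q)
    {Z : Matrix (BIdx g ℓ d) (BIdx g ℓ d) (NC2 g)}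
    (hZ : q = ∑ α, ∑ β, ncT3 (borderVec g ℓ d α) * emb23 (Z α β) * borderVec g ℓ d β) :
    IsSDS q (Fintype.card (BIdx g ℓ d)) (Fintype.card (BIdx g ℓ d)) := by
  refine isSDS_of_eq_sum_ncT3_mul hq (V := borderVec g ℓ d)
    (R := fun α => ∑ β, emb23 (Z α β) * borderVec g ℓ d β) (fun α => ?_) (fun α => ?_) ?_
  · exact bmon_mem α.toHMon
  · exact (hHomogSubmodule 1).sum_mem fun β _ => emb23_mul_bmon_mem (Z α β) (BIdx.toHMon β)
  · simp only [hZ, Finset.mul_sum, mul_assoc]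

end MiddleMatrix

section Evaluation

noncomputable def evalHom {m : Type} [Fintype m] [DecidableEq m] (A X : Fin g → Matrix m m ℝ) :
    NC2 g →ₐ[ℝ] Matrix m m ℝ :=
  lift ℝ _ (Word2 g) (FreeMonoid.lift (Sum.elim A X))

lemma evalHom_apply {m : Type} [Fintype m] [DecidableEq m] (A X : Fin g → Matrix m m ℝ)
    (p : NC2 g) : evalHom A X p = eval p A X := by
  rw [evalHom, lift_apply, eval]
  refine Finsupp.sum_congr fun w _ => ?_
  rw [FreeMonoid.lift_apply]
  rfl

lemma eval_mul {m : Type} [Fintype m] [DecidableEq m] (p q : NC2 g)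
    (A X : Fin g → Matrix m m ℝ) : eval (p * q) A X = eval p A X * eval q A X := by
  simp only [← evalHom_apply, map_mul]

lemma eval_sub {m : Type} [Fintype m] [DecidableEq m] (p q : NC2 g)
    (A X : Fin g → Matrix m m ℝ) : eval (p - q) A X = eval p A X - eval q A X := by
  simp only [← evalHom_apply, map_sub]

lemma eval_sum {m ι : Type} [Fintype m] [DecidableEq m] (s : Finset ι) (F : ι → NC2 g)
    (A X : Fin g → Matrix m m ℝ) : eval (∑ i ∈ s, F i) A X = ∑ i ∈ s, eval (F i) A X := by
  simp only [← evalHom_apply, map_sum]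

lemma eval_ncT {m : Type} [Fintype m] [DecidableEq m] {A X : Fin g → Matrix m m ℝ}
    (hA : IsSymTuple A) (hX : IsSymTuple X) (p : NC2 g) : eval (ncT p) A X = (eval p A X)ᵀ := by
  simp only [← evalHom_apply, ncT_eq_reverseLin]
  induction p using MonoidAlgebra.induction_linear with
  | zero => simp
  | add p q hp hq => rw [map_add, map_add, hp, hq, map_add, Matrix.transpose_add]
  | single w c =>
    rw [reverseLin_single, evalHom, lift_single, lift_single, Matrix.transpose_smul,
      FreeMonoid.lift_apply, FreeMonoid.lift_apply, Matrix.transpose_list_prod, List.map_map]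
    congr 2
    rw [← List.map_reverse]
    refine List.map_congr_left fun l _ => ?_
    rcases l with i | i
    exacts [(hA i).symm, (hX i).symm]

noncomputable def sdsFactor {κ m : Type} [Fintype m] [DecidableEq m] (F : κ → NC3 g)
    (A X : Fin g → Matrix m m ℝ) : Matrix (κ × m) (BIdx g ℓ d × m) ℝ :=
  Matrix.of fun ji αk => eval (hCoeff αk.1.toHMon (F ji.1)) A X ji.2 αk.2

lemma evalMat_eq_of_sds {q : NC3 g} {Z : Matrix (BIdx g ℓ d) (BIdx g ℓ d) (NC2 g)}
    (hZ : q = ∑ α, ∑ β, ncT3 (borderVec g ℓ d α) * emb23 (Z α β) * borderVec g ℓ d β)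
    {κ ν : Type} [Fintype κ] [Fintype ν] {f : κ → NC3 g} {r : ν → NC3 g}
    (hf : ∀ j, hHomog3 (f j) 1) (hr : ∀ l, hHomog3 (r l) 1)
    (hsds : q = (∑ j, ncT3 (f j) * f j) - ∑ l, ncT3 (r l) * r l)
    {m : Type} [Fintype m] [DecidableEq m] {A X : Fin g → Matrix m m ℝ}
    (hA : IsSymTuple A) (hX : IsSymTuple X) :
    evalMat Z A X =
      (sdsFactor f A X)ᵀ * sdsFactor f A X - (sdsFactor r A X)ᵀ * sdsFactor r A X := by
  ext ⟨α, i⟩ ⟨β, k⟩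
  simp only [evalMat, Matrix.of_apply, middle_eq_of_sds hZ hf hr hsds α β, eval_sub, eval_sum,
    eval_mul, eval_ncT hA hX, Matrix.sub_apply, Matrix.sum_apply, Matrix.mul_apply,
    Matrix.transpose_apply, sdsFactor, Fintype.sum_prod_type]

lemma eig_le_of_isSDS {q : NC3 g} {Z : Matrix (BIdx g ℓ d) (BIdx g ℓ d) (NC2 g)}
    (hZ : q = ∑ α, ∑ β, ncT3 (borderVec g ℓ d α) * emb23 (Z α β) * borderVec g ℓ d β)
    {σ τ : ℕ} (h : IsSDS q σ τ) {n : ℕ} {A X : MatTuple g n} (hA : IsSymTuple A)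
    (hX : IsSymTuple X) : posEig (evalMat Z A X) ≤ n * σ ∧ negEig (evalMat Z A X) ≤ n * τ := by
  obtain ⟨f, r, hf, hr, hsds⟩ := h
  rw [evalMat_eq_of_sds hZ hf hr hsds hA hX]
  exact ⟨(posEig_gramSub_le _ _).trans_eq (by simp [mul_comm]),
    (negEig_gramSub_le _ _).trans_eq (by simp [mul_comm])⟩

end Evaluation

end NCConvexity

open NCConvexity

theorem statement15_general (g : ℕ) (q : NC3 g) (hq : IsSymPoly3 q)
    (ℓ : ℕ)
    (Z : Matrix (BIdx g ℓ (aDegree3 q)) (BIdx g ℓ (aDegree3 q)) (NC2 g))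
    (hZ : q = ∑ α, ∑ β,
      ncT3 (borderVec g ℓ (aDegree3 q) α) * emb23 (Z α β) * borderVec g ℓ (aDegree3 q) β) :
    ∀ (n : ℕ) (A X : MatTuple g n), IsSymTuple A → IsSymTuple X →
      posEig (evalMat Z A X) ≤ n * sigmaPlus q ∧
      negEig (evalMat Z A X) ≤ n * sigmaMinus q := by
  intro n A X hA hX
  -- `sInf ∅ = 0`, so the minima `σ₊(q)`, `σ₋(q)` are attained only because some SDS exists.
  have hsds := isSDS_of_eq_middle hq hZ
  obtain ⟨τ, hplus⟩ : ∃ τ, IsSDS q (sigmaPlus q) τ :=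
    Nat.sInf_mem (s := {σ | ∃ τ, IsSDS q σ τ}) ⟨_, _, hsds⟩
  obtain ⟨σ, hminus⟩ : ∃ σ, IsSDS q σ (sigmaMinus q) :=
    Nat.sInf_mem (s := {τ | ∃ σ, IsSDS q σ τ}) ⟨_, _, hsds⟩
  exact ⟨(eig_le_of_isSDS hZ hplus hA hX).1, (eig_le_of_isSDS hZ hminus hA hX).2⟩

/-- for a symmetric polynomial `q(a,x)[h]` of degree `ℓ` in `x`, homogeneous
of degree two in `h`, with middle matrix `Z(a,x)`, one has `μ_±(Z(A,X)) ≤ n σ_±(q)`. -/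
theorem statement15 (g : ℕ) (hg : 1 ≤ g) (q : NC3 g) (hq : IsSymPoly3 q)
    (ℓ : ℕ) (hℓ : xDegree3 q = ℓ) (hq2 : hHomog3 q 2)
    (Z : Matrix (BIdx g ℓ (aDegree3 q)) (BIdx g ℓ (aDegree3 q)) (NC2 g))
    (hZsym : SymPolyMat Z)
    (hZ : q = ∑ α, ∑ β,
      ncT3 (borderVec g ℓ (aDegree3 q) α) * emb23 (Z α β) * borderVec g ℓ (aDegree3 q) β) :
    ∀ (n : ℕ) (A X : MatTuple g n), IsSymTuple A → IsSymTuple X →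
      posEig (evalMat Z A X) ≤ n * sigmaPlus q ∧
      negEig (evalMat Z A X) ≤ n * sigmaMinus q :=
  statement15_general g q hq ℓ Z hZ
end

section
/- Fix integers n > d ≥ 1 and let {z_1,…,z_d} be a linearly independent set in ℝ^n. Then the linear subspace { (Hz_1, Hz_2, …, Hz_d) : H an n×n real symmetric matrix } of ℝ^{nd} has codimension exactly d(d−1)/2 (equivalently, dimension nd − d(d−1)/2); in particular, the codimension does not depend on n. -/
open scoped BigOperators Kronecker Matrix

/-! With `Z` the `d × n` matrix of rows `z_i` and `V` that of a stack `v = (v_1, …, v_d)`,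
the pairing `Z Vᵀ = (⟨z_i, v_j⟩)` of `v = (Hz_j)` is `Z H Zᵀ`, which is symmetric.
Conversely, since the Gram matrix `G = Z Zᵀ` is invertible, every `v` with `Z Vᵀ` symmetric is
`(Hz_j)` for the symmetric `H = Vᵀ G⁻¹ Z + Zᵀ G⁻¹ V − Zᵀ G⁻¹ (Z Vᵀ) G⁻¹ Z`. So the space is the
common kernel of the `d(d−1)/2` forms `v ↦ ⟨z_i, v_j⟩ − ⟨z_j, v_i⟩` (`i < j`), and these are
independent because `v ↦ Z Vᵀ` is onto (take `V = (Zᵀ G⁻¹ M)ᵀ`). -/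

namespace Matrix

variable {R m n : Type*} [CommRing R] [Fintype m] [DecidableEq m] [Fintype n]

theorem exists_mul_transpose_eq_of_isUnit_mul_transpose {Z : Matrix m n R}
    (hG : IsUnit (Z * Zᵀ)) (M : Matrix m m R) : ∃ V : Matrix m n R, Z * Vᵀ = M :=
  ⟨(Zᵀ * (Z * Zᵀ)⁻¹ * M)ᵀ, by
    rw [transpose_transpose, ← Matrix.mul_assoc, ← Matrix.mul_assoc,
      mul_nonsing_inv _ ((isUnit_iff_isUnit_det _).mp hG), Matrix.one_mul]⟩

theorem exists_isSymm_mul_transpose_eq {Z V : Matrix m n R} (hG : IsUnit (Z * Zᵀ))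
    (hZV : (Z * Vᵀ).IsSymm) : ∃ H : Matrix n n R, H.IsSymm ∧ H * Zᵀ = Vᵀ := by
  set G := Z * Zᵀ with hG_def
  set S := Z * Vᵀ
  have hGdet : IsUnit G.det := (isUnit_iff_isUnit_det G).mp hG
  have hGsymm : Gᵀ = G := by rw [hG_def, transpose_mul, transpose_transpose]
  have hGinv : (G⁻¹)ᵀ = G⁻¹ := by rw [transpose_nonsing_inv, hGsymm]
  have hVZ : V * Zᵀ = S := by rw [← hZV.eq, transpose_mul, transpose_transpose]
  -- `Vᵀ G⁻¹ Z` already sends `Zᵀ` to `Vᵀ`; symmetrize it and remove what is then counted twice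
  -- on the row space of `Z`.
  refine ⟨Vᵀ * G⁻¹ * Z + Zᵀ * G⁻¹ * V - Zᵀ * G⁻¹ * S * G⁻¹ * Z, ?_, ?_⟩
  · simp only [IsSymm, transpose_sub, transpose_add, transpose_mul, transpose_transpose, hGinv,
      hZV.eq, Matrix.mul_assoc]
    abel
  · simp only [Matrix.sub_mul, Matrix.add_mul, Matrix.mul_assoc, ← hG_def, hVZ,
      nonsing_inv_mul G hGdet, Matrix.mul_one]
    abel

end Matrix

theorem LinearIndependent.isUnit_mul_transpose {m n : Type*} [Fintype m] [DecidableEq m]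
    [Fintype n] {Z : Matrix m n ℝ} (hZ : LinearIndependent ℝ Z.row) : IsUnit (Z * Zᵀ) := by
  simpa using (Matrix.PosDef.mul_conjTranspose_self Z (Matrix.vecMul_injective_iff.mpr hZ)).isUnit
abbrev StrictPairs (d : ℕ) := Σ j : Fin d, Fin j

namespace StrictPairs

variable {d : ℕ}

def lo (p : StrictPairs d) : Fin d := p.2.castLE p.1.isLt.le

theorem lo_lt (p : StrictPairs d) : p.lo < p.1 := p.2.isLt

theorem card_eq (d : ℕ) : Fintype.card (StrictPairs d) = d * (d - 1) / 2 := by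
  rw [Fintype.card_sigma]
  simp only [Fintype.card_fin]
  rw [Fin.sum_univ_eq_sum_range (fun i => i) d, Finset.sum_range_id]

variable (R : Type*) [CommRing R]

def skewPart : Matrix (Fin d) (Fin d) R →ₗ[R] (StrictPairs d → R) where
  toFun M p := M p.lo p.1 - M p.1 p.lo
  map_add' M N := by ext p; simp only [Matrix.add_apply, Pi.add_apply]; ring
  map_smul' c M := by
    ext p
    simp only [Matrix.smul_apply, smul_eq_mul, Pi.smul_apply, RingHom.id_apply]
    ring

variable {R}

theorem skewPart_eq_zero_iff {M : Matrix (Fin d) (Fin d) R} : skewPart R M = 0 ↔ M.IsSymm := by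
  refine ⟨fun h => Matrix.IsSymm.ext fun i j => ?_, fun h => ?_⟩
  · have hpair (p : StrictPairs d) : M p.lo p.1 = M p.1 p.lo := sub_eq_zero.mp (congrFun h p)
    rcases lt_trichotomy i j with hij | rfl | hij
    · exact (hpair ⟨j, ⟨i, hij⟩⟩).symm
    · rfl
    · exact hpair ⟨i, ⟨j, hij⟩⟩
  · ext p
    simp [skewPart, h.apply]

theorem skewPart_surjective : Function.Surjective (skewPart (d := d) R) := by
  intro c
  refine ⟨Matrix.of fun i j => if h : i < j then c ⟨j, ⟨i, h⟩⟩ else 0, funext fun p => ?_⟩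
  simp only [skewPart, LinearMap.coe_mk, AddHom.coe_mk, Matrix.of_apply, p.lo_lt, ↓reduceDIte,
    p.lo_lt.not_gt, sub_zero]
  rfl

end StrictPairs

namespace NCConvexity

variable {n d : ℕ} (z : Fin d → Fin n → ℝ)

def pairingMap : (Fin d → Fin n → ℝ) →ₗ[ℝ] Matrix (Fin d) (Fin d) ℝ where
  toFun v := Matrix.of z * (Matrix.of v)ᵀ
  map_add' v w := by rw [← Matrix.of_add_of, Matrix.transpose_add, Matrix.mul_add]
  map_smul' c v := by
    rw [RingHom.id_apply, ← Matrix.mul_smul, ← Matrix.transpose_smul]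
    rfl

theorem pairingMap_apply (v : Fin d → Fin n → ℝ) :
    pairingMap z v = Matrix.of z * (Matrix.of v)ᵀ := rfl

theorem of_stackMap (H : Matrix (Fin n) (Fin n) ℝ) :
    Matrix.of (stackMap n d z H) = (H * (Matrix.of z)ᵀ)ᵀ := by
  ext j r
  simp [stackMap, Matrix.mulVec, Matrix.mul_apply, dotProduct]

theorem map_stackMap_symmSub_eq_ker (hG : IsUnit (Matrix.of z * (Matrix.of z)ᵀ)) :
    (symmSub n).map (stackMap n d z) =
      LinearMap.ker (StrictPairs.skewPart ℝ ∘ₗ pairingMap z) := by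
  ext v
  simp only [Submodule.mem_map, LinearMap.mem_ker, LinearMap.comp_apply,
    StrictPairs.skewPart_eq_zero_iff]
  constructor
  · rintro ⟨H, hH, rfl⟩
    change H.IsSymm at hH
    rw [Matrix.IsSymm, pairingMap_apply, of_stackMap, Matrix.transpose_transpose,
      Matrix.transpose_mul, Matrix.transpose_mul, hH.eq, Matrix.transpose_transpose, Matrix.mul_assoc]
  · intro hv
    obtain ⟨H, hH, hHZ⟩ := Matrix.exists_isSymm_mul_transpose_eq hG hv
    refine ⟨H, hH, Matrix.of.injective ?_⟩
    rw [of_stackMap, hHZ, Matrix.transpose_transpose]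

theorem range_skewPart_comp_pairingMap (hG : IsUnit (Matrix.of z * (Matrix.of z)ᵀ)) :
    LinearMap.range (StrictPairs.skewPart ℝ ∘ₗ pairingMap z) = ⊤ :=
  LinearMap.range_eq_top.mpr <| (StrictPairs.skewPart_surjective).comp
    (Matrix.exists_mul_transpose_eq_of_isUnit_mul_transpose hG)

end NCConvexity

open NCConvexity

theorem statement17_general (n d : ℕ)
    (z : Fin d → Fin n → ℝ) (hz : LinearIndependent ℝ z) :
    Module.finrank ℝ (Submodule.map (stackMap n d z) (symmSub n)) =
      n * d - d * (d - 1) / 2 ∧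
    Module.finrank ℝ
        ((Fin d → Fin n → ℝ) ⧸ Submodule.map (stackMap n d z) (symmSub n)) =
      d * (d - 1) / 2 := by
  have hG : IsUnit (Matrix.of z * (Matrix.of z)ᵀ) := hz.isUnit_mul_transpose
  set φ := StrictPairs.skewPart ℝ ∘ₗ pairingMap z
  have hrange : Module.finrank ℝ (LinearMap.range φ) = d * (d - 1) / 2 := by
    rw [range_skewPart_comp_pairingMap z hG, finrank_top, Module.finrank_fintype_fun_eq_card,
      StrictPairs.card_eq]
  have hdom : Module.finrank ℝ (Fin d → Fin n → ℝ) = n * d := by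
    simp [Module.finrank_pi_fintype, mul_comm]
  rw [map_stackMap_symmSub_eq_ker z hG]
  refine ⟨?_, by rw [φ.quotKerEquivRange.finrank_eq, hrange]⟩
  have := φ.finrank_range_add_finrank_ker
  rw [hrange, hdom] at this
  exact Nat.eq_sub_of_add_eq' this

/-- for linearly independent `z_1, …, z_d` in `ℝ^n` (`n > d`), the space
`{(Hz_1, …, Hz_d) : H symmetric}` has dimension `nd − d(d−1)/2` and codimension `d(d−1)/2`
in `ℝ^{nd}`. -/
theorem statement17 (n d : ℕ) (hd : 1 ≤ d) (hnd : d < n)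
    (z : Fin d → Fin n → ℝ) (hz : LinearIndependent ℝ z) :
    Module.finrank ℝ (Submodule.map (stackMap n d z) (symmSub n)) =
      n * d - d * (d - 1) / 2 ∧
    Module.finrank ℝ
        ((Fin d → Fin n → ℝ) ⧸ Submodule.map (stackMap n d z) (symmSub n)) =
      d * (d - 1) / 2 :=
  statement17_general n d z hz
end

section
/- (CHSY Lemma) Fix integers g ≥ 1 and n > d ≥ 1 and let {z_1,…,z_d} be a linearly independent subset of ℝ^n. Then the linear subspace { ⊕_{j=1}^g (H_j z_1, H_j z_2, …, H_j z_d) : H = (H_1,…,H_g) a g-tuple of n×n real symmetric matrices } of ℝ^{gnd} has codimension exactly g·d(d−1)/2 (equivalently, dimension gnd − g·d(d−1)/2), independent of n. -/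
open scoped BigOperators Kronecker Matrix

open NCConvexity

/-!
Let `M` and `V` be the matrices with rows `z_i` and `v_i`. The family `v_i` is of the form
`v_i = H z_i` with `H` symmetric exactly when `S = M Vᵀ = (z_a ⬝ v_b)_{a,b}` is symmetric:
necessity is clear, and conversely, linear independence gives a right inverse `W` of `M`, and
then `H = Vᵀ Wᵀ + W V - W S Wᵀ` works. Hence the subspace is the kernel of the linear map
recording, in each of the `g` blocks, the `d(d-1)/2` entries `z_a ⬝ v_b - z_b ⬝ v_a` with
`a < b`. This map is onto, since `V = Tᵀ Wᵀ` gives `M Vᵀ = T` for any strictly upper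
triangular `T`; so the quotient has dimension `g·d(d-1)/2` and the subspace `gnd - g·d(d-1)/2`.
-/

namespace Matrix

variable {R K ι m : Type*} [Fintype ι] [DecidableEq ι] [Fintype m]

theorem exists_mul_eq_one_of_linearIndependent_row [Field K] {M : Matrix ι m K}
    (hM : LinearIndependent K M.row) : ∃ W : Matrix m ι K, M * W = 1 := by
  refine mulVec_surjective_iff_exists_right_inverse.mp fun y => ?_
  have hrange : LinearMap.range M.mulVecLin = ⊤ :=
    Submodule.eq_top_of_finrank_eq <| by
      rw [Module.finrank_fintype_fun_eq_card, ← hM.rank_matrix]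
      rfl
  exact LinearMap.range_eq_top.mp hrange y

theorem exists_isSymm_mul_eq [CommRing R] {M : Matrix ι m R} {W : Matrix m ι R}
    (hW : M * W = 1) {V : Matrix ι m R} (hV : (M * Vᵀ).IsSymm) :
    ∃ H : Matrix m m R, H.IsSymm ∧ M * H = V := by
  refine ⟨Vᵀ * Wᵀ + W * V - W * (M * Vᵀ) * Wᵀ, ?_, ?_⟩
  · generalize M * Vᵀ = S at hV ⊢
    simp only [IsSymm, transpose_add, transpose_sub, transpose_mul, transpose_transpose, hV.eq,
      Matrix.mul_assoc]
    abel
  · simp only [Matrix.mul_add, Matrix.mul_sub, ← Matrix.mul_assoc, hW, Matrix.one_mul]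
    abel

theorem exists_isSymm_mulVec_eq_iff [Field K] {z : ι → m → K} (hz : LinearIndependent K z)
    (v : ι → m → K) :
    (∃ H : Matrix m m K, H.IsSymm ∧ ∀ i, H *ᵥ z i = v i) ↔
      ∀ a b, z a ⬝ᵥ v b = z b ⬝ᵥ v a := by
  constructor
  · rintro ⟨H, hH, hv⟩ a b
    rw [← hv, ← hv, dotProduct_mulVec, ← mulVec_transpose, hH.eq, dotProduct_comm]
  · intro hv
    obtain ⟨W, hW⟩ := exists_mul_eq_one_of_linearIndependent_row (M := of z) hz
    obtain ⟨H, hH, hMH⟩ := exists_isSymm_mul_eq hW (V := of v)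
      (IsSymm.ext fun a b => (hv a b).symm)
    refine ⟨H, hH, fun i => ?_⟩
    rw [← hH.eq, mulVec_transpose]
    exact congrFun hMH i

end Matrix

section SymmDefect

variable {R K ι m : Type*} [Fintype m]

def symmDefect [CommRing R] [LinearOrder ι] (κ : Type*) (z : ι → m → R) :
    (κ → ι → m → R) →ₗ[R] (κ × {p : ι × ι // p.1 < p.2} → R) where
  toFun v kp := z kp.2.1.1 ⬝ᵥ v kp.1 kp.2.1.2 - z kp.2.1.2 ⬝ᵥ v kp.1 kp.2.1.1
  map_add' v w := by
    funext kp
    simp only [Pi.add_apply, dotProduct_add]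
    ring
  map_smul' c v := by
    funext kp
    simp only [Pi.smul_apply, dotProduct_smul, smul_eq_mul, RingHom.id_apply]
    ring

theorem mem_ker_symmDefect [CommRing R] [LinearOrder ι] {κ : Type*} {z : ι → m → R}
    {v : κ → ι → m → R} :
    v ∈ LinearMap.ker (symmDefect κ z) ↔ ∀ k a b, z a ⬝ᵥ v k b = z b ⬝ᵥ v k a := by
  rw [LinearMap.mem_ker, funext_iff]
  constructor
  · intro h k a b
    rcases lt_trichotomy a b with hab | rfl | hab
    · exact sub_eq_zero.mp (h (k, ⟨(a, b), hab⟩))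
    · rfl
    · exact (sub_eq_zero.mp (h (k, ⟨(b, a), hab⟩))).symm
  · rintro h ⟨k, ⟨⟨a, b⟩, _⟩⟩
    exact sub_eq_zero.mpr (h k a b)

theorem symmDefect_surjective [Field K] [Fintype ι] [LinearOrder ι] {κ : Type*}
    {z : ι → m → K} (hz : LinearIndependent K z) : Function.Surjective (symmDefect κ z) := by
  intro t
  obtain ⟨W, hW⟩ := Matrix.exists_mul_eq_one_of_linearIndependent_row (M := Matrix.of z) hz
  let T : κ → Matrix ι ι K := fun k => Matrix.of fun a b =>
    if h : a < b then t (k, ⟨(a, b), h⟩) else 0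
  have hT : ∀ k, Matrix.of z * (W * T k) = T k := fun k => by
    rw [← Matrix.mul_assoc, hW, Matrix.one_mul]
  refine ⟨fun k => (W * T k)ᵀ, funext fun ⟨k, ⟨⟨a, b⟩, hab⟩⟩ => ?_⟩
  change (Matrix.of z * (W * T k)) a b - (Matrix.of z * (W * T k)) b a = _
  simp only [hT, T, Matrix.of_apply, dif_pos hab, dif_neg (lt_asymm hab), sub_zero]

end SymmDefect

theorem Fintype.card_subtype_fst_lt_snd (ι : Type*) [Fintype ι] [LinearOrder ι] :
    Fintype.card {p : ι × ι // p.1 < p.2} = Fintype.card ι * (Fintype.card ι - 1) / 2 := by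
  rw [Fintype.card_subtype, Fintype.card_product_filter_lt, Nat.choose_two_right]

theorem map_stackMapG_eq_ker_symmDefect {g n d : ℕ} {z : Fin d → Fin n → ℝ}
    (hz : LinearIndependent ℝ z) :
    Submodule.map (stackMapG g n d z) (Submodule.pi Set.univ fun _ => symmSub n) =
      LinearMap.ker (symmDefect (Fin g) z) := by
  ext v
  simp only [Submodule.mem_map, Submodule.mem_pi, Set.mem_univ, true_implies, mem_ker_symmDefect,
    ← Matrix.exists_isSymm_mulVec_eq_iff hz, Classical.skolem]
  constructor
  · rintro ⟨H, hH, rfl⟩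
    exact ⟨H, fun k => ⟨hH k, fun i => rfl⟩⟩
  · rintro ⟨H, hH⟩
    exact ⟨H, fun k => (hH k).1, funext fun k => funext (hH k).2⟩

theorem statement18_general (g n d : ℕ)
    (z : Fin d → Fin n → ℝ) (hz : LinearIndependent ℝ z) :
    Module.finrank ℝ (Submodule.map (stackMapG g n d z)
        (Submodule.pi Set.univ (fun _ : Fin g => symmSub n))) =
      g * (n * d) - g * (d * (d - 1) / 2) ∧
    Module.finrank ℝ
        ((Fin g → Fin d → Fin n → ℝ) ⧸ Submodule.map (stackMapG g n d z)
          (Submodule.pi Set.univ (fun _ : Fin g => symmSub n))) =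
      g * (d * (d - 1) / 2) := by
  rw [map_stackMapG_eq_ker_symmDefect hz]
  have hquot : Module.finrank ℝ
      ((Fin g → Fin d → Fin n → ℝ) ⧸ LinearMap.ker (symmDefect (Fin g) z)) =
        g * (d * (d - 1) / 2) := by
    rw [((symmDefect (Fin g) z).quotKerEquivOfSurjective (symmDefect_surjective hz)).finrank_eq,
      Module.finrank_fintype_fun_eq_card, Fintype.card_prod, Fintype.card_subtype_fst_lt_snd,
      Fintype.card_fin, Fintype.card_fin]
  have hdim : Module.finrank ℝ (Fin g → Fin d → Fin n → ℝ) = g * (n * d) := by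
    simp [Module.finrank_pi_fintype, mul_comm]
  refine ⟨?_, hquot⟩
  have := Submodule.finrank_quotient_add_finrank (LinearMap.ker (symmDefect (Fin g) z))
  omega

/-- CHSY Lemma: for linearly independent `z_1, …, z_d` in `ℝ^n` (`n > d`),
the space `{⊕_{j=1}^g (H_j z_1, …, H_j z_d) : H_j symmetric}` has dimension
`gnd − g·d(d−1)/2` and codimension `g·d(d−1)/2` in `ℝ^{gnd}`. -/
theorem statement18 (g n d : ℕ) (hg : 1 ≤ g) (hd : 1 ≤ d) (hnd : d < n)
    (z : Fin d → Fin n → ℝ) (hz : LinearIndependent ℝ z) :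
    Module.finrank ℝ (Submodule.map (stackMapG g n d z)
        (Submodule.pi Set.univ (fun _ : Fin g => symmSub n))) =
      g * (n * d) - g * (d * (d - 1) / 2) ∧
    Module.finrank ℝ
        ((Fin g → Fin d → Fin n → ℝ) ⧸ Submodule.map (stackMapG g n d z)
          (Submodule.pi Set.univ (fun _ : Fin g => symmSub n))) =
      g * (d * (d - 1) / 2) :=
  statement18_general g n d z hz
end
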